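/- arXiv:2501.16233 — 4 statements merged into one kernel-verified Lean document; each statement's English description precedes it below -/
import Mathlib

section
/- For vertex-disjoint finite graphs Γ₁, …, Γₙ, box(⋁_{i=1}^n Γᵢ) = Σ_{i=1}^n box(Γᵢ). -/
/-- An interval graph: adjacency given by intersection of closed real intervals. -/
def IsIntervalGraph {V : Type*} (I : SimpleGraph V) : Prop :=
  ∃ a b : V → ℝ, ∀ u v : V,
    I.Adj u v ↔ u ≠ v ∧ (Set.Icc (a u) (b u) ∩ Set.Icc (a v) (b v)).Nonempty

/-- A unit interval graph: adjacency given by intersection of closed unit intervals. -/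
def IsUnitIntervalGraph {V : Type*} (I : SimpleGraph V) : Prop :=
  ∃ a : V → ℝ, ∀ u v : V,
    I.Adj u v ↔ u ≠ v ∧ (Set.Icc (a u) (a u + 1) ∩ Set.Icc (a v) (a v + 1)).Nonempty

/-- Boxicity: least `k` such that `G` is the intersection of `k` interval graphs. -/
noncomputable def boxicity {V : Type*} (G : SimpleGraph V) : ℕ :=
  sInf {k | ∃ I : Fin k → SimpleGraph V, (∀ i, IsIntervalGraph (I i)) ∧
    ∀ u v, G.Adj u v ↔ (u ≠ v ∧ ∀ i, (I i).Adj u v)}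

/-- Cubicity: least `k` such that `G` is the intersection of `k` unit interval graphs. -/
noncomputable def cubicity {V : Type*} (G : SimpleGraph V) : ℕ :=
  sInf {k | ∃ I : Fin k → SimpleGraph V, (∀ i, IsUnitIntervalGraph (I i)) ∧
    ∀ u v, G.Adj u v ↔ (u ≠ v ∧ ∀ i, (I i).Adj u v)}

/-- Transitive closure of the Cartesian product of complete graphs `K_{m i + 1}`. -/
def TCC {d : ℕ} (m : Fin d → ℕ) : SimpleGraph (∀ i, Fin (m i + 1)) where
  Adj x y := x ≠ y ∧ ((∀ i, (x i : ℕ) ≤ y i) ∨ (∀ i, (y i : ℕ) ≤ x i))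
  symm := ⟨fun _ _ h => ⟨h.1.symm, h.2.symm⟩⟩
  loopless := ⟨fun _ h => h.1 rfl⟩

/-- Transitive closure of the `s`-dimensional hypercube. -/
def TCH (s : ℕ) : SimpleGraph (∀ _ : Fin s, Fin 2) := TCC (fun _ => 1)

/-- Join of a family of vertex-disjoint graphs, on the sigma of their vertex types. -/
def graphJoinFamily {ι : Type*} {V : ι → Type*} (G : ∀ i, SimpleGraph (V i)) :
    SimpleGraph (Σ i, V i) where
  Adj x y := x.1 ≠ y.1 ∨
    ∃ (a b : V x.1), x = ⟨x.1, a⟩ ∧ y = ⟨x.1, b⟩ ∧ (G x.1).Adj a b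
  symm := by
    refine ⟨?_⟩
    rintro ⟨i, u⟩ ⟨j, v⟩ (h | ⟨a, b, ha, hb, hadj⟩)
    · exact Or.inl h.symm
    · obtain ⟨rfl, h2⟩ := Sigma.mk.inj_iff.mp hb
      obtain ⟨-, h1⟩ := Sigma.mk.inj_iff.mp ha
      exact Or.inr ⟨v, u, by simp, by simp,
        by rw [eq_of_heq h2, eq_of_heq h1]; exact hadj.symm⟩
  loopless := by
    refine ⟨?_⟩
    rintro ⟨i, u⟩ (h | ⟨a, b, ha, hb, hadj⟩)
    · exact h rfl
    · obtain ⟨-, h1⟩ := Sigma.mk.inj_iff.mp ha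
      obtain ⟨-, h2⟩ := Sigma.mk.inj_iff.mp hb
      exact hadj.ne (by rw [← eq_of_heq h1, ← eq_of_heq h2])

open Set

section MyAux
variable {V : Type*}

def intervalGraph (a b : V → ℝ) : SimpleGraph V where
  Adj u v := u ≠ v ∧ (Set.Icc (a u) (b u) ∩ Set.Icc (a v) (b v)).Nonempty
  symm := ⟨fun u v h => ⟨h.1.symm, by rw [Set.inter_comm]; exact h.2⟩⟩
  loopless := ⟨fun u h => h.1 rfl⟩

lemma intervalGraph_adj (a b : V → ℝ) (u v : V) :
    (intervalGraph a b).Adj u v ↔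
      u ≠ v ∧ (Set.Icc (a u) (b u) ∩ Set.Icc (a v) (b v)).Nonempty := Iff.rfl

lemma isIntervalGraph_intervalGraph (a b : V → ℝ) : IsIntervalGraph (intervalGraph a b) :=
  ⟨a, b, fun _ _ => Iff.rfl⟩

lemma boxicity_le_card {G : SimpleGraph V} {ι : Type*} [Fintype ι]
    (I : ι → SimpleGraph V) (hI : ∀ i, IsIntervalGraph (I i))
    (hG : ∀ u v, G.Adj u v ↔ u ≠ v ∧ ∀ i, (I i).Adj u v) :
    boxicity G ≤ Fintype.card ι := by
  apply Nat.sInf_le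
  refine ⟨fun s => I ((Fintype.equivFin ι).symm s), fun s => hI _, fun u v => ?_⟩
  rw [hG u v]
  refine and_congr_right fun _ => ⟨fun h s => h _, fun h i => ?_⟩
  simpa using h (Fintype.equivFin ι i)

lemma sep_key [DecidableEq V] {u v : V} (huv : u ≠ v) (x y : V) :
    (Icc (if x = v then (2:ℝ) else 0) (if x = u then (1:ℝ) else 3) ∩
     Icc (if y = v then (2:ℝ) else 0) (if y = u then (1:ℝ) else 3)).Nonempty ↔
      ¬((x = u ∧ y = v) ∨ (x = v ∧ y = u)) := by
  rw [Set.Icc_inter_Icc, Set.nonempty_Icc]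
  by_cases hxu : x = u <;> by_cases hxv : x = v <;> by_cases hyu : y = u <;>
    by_cases hyv : y = v <;> simp_all <;> norm_num

lemma boxicity_set_nonempty [Fintype V] (G : SimpleGraph V) :
    {k | ∃ I : Fin k → SimpleGraph V, (∀ i, IsIntervalGraph (I i)) ∧
      ∀ u v, G.Adj u v ↔ (u ≠ v ∧ ∀ i, (I i).Adj u v)}.Nonempty := by
  classical
  haveI : DecidableEq V := Classical.decEq V
  let P := {p : V × V // p.1 ≠ p.2 ∧ ¬ G.Adj p.1 p.2}
  let fa : P → V → ℝ := fun p w => if w = p.1.2 then 2 else 0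
  let fb : P → V → ℝ := fun p w => if w = p.1.1 then 1 else 3
  have key : ∀ (p : P) (x y : V),
      (Icc (fa p x) (fb p x) ∩ Icc (fa p y) (fb p y)).Nonempty ↔
        ¬((x = p.1.1 ∧ y = p.1.2) ∨ (x = p.1.2 ∧ y = p.1.1)) :=
    fun p x y => sep_key p.2.1 x y
  refine ⟨Fintype.card P, fun t => intervalGraph (fa ((Fintype.equivFin P).symm t))
    (fb ((Fintype.equivFin P).symm t)), fun t => isIntervalGraph_intervalGraph _ _,
    fun x y => ?_⟩
  constructor
  · intro hadj
    refine ⟨hadj.ne, fun t => ⟨hadj.ne, ?_⟩⟩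
    rw [key]
    rintro (⟨rfl, rfl⟩ | ⟨rfl, rfl⟩)
    · exact ((Fintype.equivFin P).symm t).2.2 hadj
    · exact ((Fintype.equivFin P).symm t).2.2 hadj.symm
  · rintro ⟨hxy, hall⟩
    by_contra hG'
    have h2 := (hall (Fintype.equivFin P ⟨(x, y), hxy, hG'⟩)).2
    rw [Equiv.symm_apply_apply, key] at h2
    exact h2 (Or.inl ⟨rfl, rfl⟩)

lemma exists_good_intervals [Fintype V] {I : SimpleGraph V} (h : IsIntervalGraph I) :
    ∃ a b : V → ℝ, (∀ u, a u ≤ b u) ∧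
      ∀ u v, I.Adj u v ↔ u ≠ v ∧ (Icc (a u) (b u) ∩ Icc (a v) (b v)).Nonempty := by
  classical
  obtain ⟨a, b, hab⟩ := h
  obtain ⟨M, hM⟩ := (Set.finite_range b).bddAbove
  have hMb : ∀ v, b v ≤ M := fun v => hM (Set.mem_range_self v)
  let e := Fintype.equivFin V
  let c : V → ℝ := fun u => M + 1 + (e u : ℕ)
  have hcb : ∀ u v, b v < c u := by
    intro u v
    have h1 : b v ≤ M := hMb v
    have h2 : (0:ℝ) ≤ ((e u : ℕ) : ℝ) := Nat.cast_nonneg _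
    simp only [c]; linarith
  have hcinj : ∀ {u v : V}, u ≠ v → c u ≠ c v := by
    intro u v huv hc
    apply huv
    have h1 : ((e u : ℕ) : ℝ) = ((e v : ℕ) : ℝ) := by simp only [c] at hc; linarith
    exact e.injective (Fin.ext (Nat.cast_injective h1))
  refine ⟨fun u => if a u ≤ b u then a u else c u,
          fun u => if a u ≤ b u then b u else c u, fun u => ?_, fun u v => ?_⟩
  · by_cases h : a u ≤ b u <;> simp [h]
  · rw [hab]
    refine and_congr_right fun huv => ?_
    beta_reduce
    by_cases h1 : a u ≤ b u
    · by_cases h2 : a v ≤ b v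
      · rw [if_pos h1, if_pos h1, if_pos h2, if_pos h2]
      · rw [if_pos h1, if_pos h1, if_neg h2, if_neg h2]
        refine iff_of_false ?_ ?_
        · rintro ⟨x, -, hx3, hx4⟩
          exact h2 (le_trans hx3 hx4)
        · rintro ⟨x, ⟨hx1, hx2⟩, hx3, hx4⟩
          have := hcb v u
          linarith
    · by_cases h2 : a v ≤ b v
      · rw [if_neg h1, if_neg h1, if_pos h2, if_pos h2]
        refine iff_of_false ?_ ?_
        · rintro ⟨x, ⟨hx1, hx2⟩, -⟩
          exact h1 (le_trans hx1 hx2)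
        · rintro ⟨x, ⟨hx1, hx2⟩, hx3, hx4⟩
          have := hcb u v
          linarith
      · rw [if_neg h1, if_neg h1, if_neg h2, if_neg h2]
        refine iff_of_false ?_ ?_
        · rintro ⟨x, ⟨hx1, hx2⟩, -⟩
          exact h1 (le_trans hx1 hx2)
        · rintro ⟨x, ⟨hx1, hx2⟩, hx3, hx4⟩
          exact hcinj huv (le_antisymm (by linarith) (by linarith))

lemma interval_cross {p P q Q r R s S : ℝ}
    (h12 : ¬ (Icc p P ∩ Icc q Q).Nonempty)
    (h34 : ¬ (Icc r R ∩ Icc s S).Nonempty)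
    (h13 : (Icc p P ∩ Icc r R).Nonempty)
    (h14 : (Icc p P ∩ Icc s S).Nonempty)
    (h23 : (Icc q Q ∩ Icc r R).Nonempty)
    (h24 : (Icc q Q ∩ Icc s S).Nonempty) : False := by
  obtain ⟨x1, ⟨a1, b1⟩, a2, b2⟩ := h13
  obtain ⟨x2, ⟨c1, d1⟩, c2, d2⟩ := h14
  obtain ⟨x3, ⟨e1, f1⟩, e2, f2⟩ := h23
  obtain ⟨x4, ⟨g1, h1⟩, g2, h2⟩ := h24
  have hpq : Q < p ∨ P < q := by
    by_contra hc
    push_neg at hc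
    exact h12 ⟨max p q, ⟨le_max_left _ _, max_le (by linarith) hc.2⟩,
      le_max_right _ _, max_le hc.1 (by linarith)⟩
  have hrs : S < r ∨ R < s := by
    by_contra hc
    push_neg at hc
    exact h34 ⟨max r s, ⟨le_max_left _ _, max_le (by linarith) hc.2⟩,
      le_max_right _ _, max_le hc.1 (by linarith)⟩
  rcases hpq with h | h <;> rcases hrs with h' | h' <;> linarith

end MyAux

section JoinAux

lemma graphJoinFamily_adj_same {ι : Type*} {W : ι → Type*} (G : ∀ i, SimpleGraph (W i))
    (i : ι) (u v : W i) :
    (graphJoinFamily G).Adj ⟨i, u⟩ ⟨i, v⟩ ↔ (G i).Adj u v := by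
  constructor
  · rintro (h | ⟨a, b, ha, hb, hadj⟩)
    · exact absurd rfl h
    · obtain ⟨-, h1⟩ := Sigma.mk.inj_iff.mp ha
      obtain ⟨-, h2⟩ := Sigma.mk.inj_iff.mp hb
      rw [eq_of_heq h1, eq_of_heq h2]
      exact hadj
  · exact fun h => Or.inr ⟨u, v, rfl, rfl, h⟩

end JoinAux

theorem boxicity_join_family {n : ℕ} {V : Fin n → Type*} [∀ i, Fintype (V i)]
    (G : ∀ i, SimpleGraph (V i)) :
    boxicity (graphJoinFamily G) = ∑ i, boxicity (G i) := by
  classical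
  refine le_antisymm ?_ ?_
  · -- upper bound
    have hspec : ∀ i, ∃ I : Fin (boxicity (G i)) → SimpleGraph (V i),
        (∀ t, IsIntervalGraph (I t)) ∧
        ∀ u v, (G i).Adj u v ↔ u ≠ v ∧ ∀ t, (I t).Adj u v :=
      fun i => Nat.sInf_mem (boxicity_set_nonempty (G i))
    choose I hint hrep using hspec
    choose a b hab hiff using fun i t => exists_good_intervals (hint i t)
    have hrep' : ∀ i (u v : V i), (G i).Adj u v ↔ u ≠ v ∧
        ∀ t, (Icc (a i t u) (b i t u) ∩ Icc (a i t v) (b i t v)).Nonempty := by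
      intro i u v
      rw [hrep i u v]
      refine and_congr_right fun huv => forall_congr' fun t => ?_
      rw [hiff i t u v]
      simp [huv]
    choose lo hlo using fun i (t : Fin (boxicity (G i))) => (Set.finite_range (a i t)).bddBelow
    choose hi hhi using fun i (t : Fin (boxicity (G i))) => (Set.finite_range (b i t)).bddAbove
    set Lo : ∀ i, Fin (boxicity (G i)) → ℝ := fun i t => min (lo i t) 0 with hLo
    set Hi : ∀ i, Fin (boxicity (G i)) → ℝ := fun i t => max (hi i t) 0 with hHi
    have hLo0 : ∀ i t, Lo i t ≤ 0 := fun i t => min_le_right _ _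
    have hHi0 : ∀ i t, (0:ℝ) ≤ Hi i t := fun i t => le_max_right _ _
    have hLoa : ∀ i t (u : V i), Lo i t ≤ a i t u :=
      fun i t u => le_trans (min_le_left _ _) (hlo i t (Set.mem_range_self u))
    have hbHi : ∀ i t (u : V i), b i t u ≤ Hi i t :=
      fun i t u => le_trans (hhi i t (Set.mem_range_self u)) (le_max_left _ _)
    set A : ∀ i, Fin (boxicity (G i)) → (Σ j, V j) → ℝ :=
      fun i t x => if h : x.1 = i then a i t (cast (congrArg V h) x.2) else Lo i t with hA
    set B : ∀ i, Fin (boxicity (G i)) → (Σ j, V j) → ℝ :=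
      fun i t x => if h : x.1 = i then b i t (cast (congrArg V h) x.2) else Hi i t with hB
    have hAnat : ∀ i t (u : V i), A i t ⟨i, u⟩ = a i t u := by
      intro i t u
      show (if h : i = i then a i t (cast (congrArg V h) u) else Lo i t) = a i t u
      rw [dif_pos rfl]
      exact congrArg _ (eq_of_heq (cast_heq _ _))
    have hBnat : ∀ i t (u : V i), B i t ⟨i, u⟩ = b i t u := by
      intro i t u
      show (if h : i = i then b i t (cast (congrArg V h) u) else Hi i t) = b i t u
      rw [dif_pos rfl]
      exact congrArg _ (eq_of_heq (cast_heq _ _))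
    have hAfor : ∀ i t {j} (hj : j ≠ i) (v : V j), A i t ⟨j, v⟩ = Lo i t := by
      intro i t j hj v
      show (if h : j = i then a i t (cast (congrArg V h) v) else Lo i t) = Lo i t
      exact dif_neg hj
    have hBfor : ∀ i t {j} (hj : j ≠ i) (v : V j), B i t ⟨j, v⟩ = Hi i t := by
      intro i t j hj v
      show (if h : j = i then b i t (cast (congrArg V h) v) else Hi i t) = Hi i t
      exact dif_neg hj
    have hhuge : ∀ i t, (Icc (Lo i t) (Hi i t) ∩ Icc (Lo i t) (Hi i t)).Nonempty :=
      fun i t => ⟨0, ⟨hLo0 i t, hHi0 i t⟩, hLo0 i t, hHi0 i t⟩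
    have hcross : ∀ i t (u : V i) (lo' hi' : ℝ), lo' ≤ 0 → (0:ℝ) ≤ hi' →
        (Icc (a i t u) (b i t u) ∩ Icc lo' hi').Nonempty ∨ True := fun _ _ _ _ _ _ _ => Or.inr trivial
    refine le_trans (boxicity_le_card (ι := Σ i, Fin (boxicity (G i)))
      (fun s => intervalGraph (A s.1 s.2) (B s.1 s.2))
      (fun s => isIntervalGraph_intervalGraph _ _) ?_) (le_of_eq (by simp))
    rintro ⟨i, u⟩ ⟨j, v⟩
    by_cases hij : i = j
    · subst hij
      rw [graphJoinFamily_adj_same, hrep' i u v]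
      constructor
      · rintro ⟨huv, hall⟩
        have hne : (⟨i, u⟩ : Σ j, V j) ≠ ⟨i, v⟩ := by simp [huv]
        refine ⟨hne, ?_⟩
        rintro ⟨l, t⟩
        refine ⟨hne, ?_⟩
        by_cases hl : l = i
        · subst hl
          rw [hAnat, hAnat, hBnat, hBnat]
          exact hall t
        · rw [hAfor l t (fun h => hl h.symm) u, hAfor l t (fun h => hl h.symm) v,
              hBfor l t (fun h => hl h.symm) u, hBfor l t (fun h => hl h.symm) v]
          exact hhuge l t
      · rintro ⟨hne, hall⟩
        have huv : u ≠ v := fun h => hne (by rw [h])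
        refine ⟨huv, fun t => ?_⟩
        have h2 := (hall ⟨i, t⟩).2
        rwa [hAnat, hAnat, hBnat, hBnat] at h2
    · constructor
      · intro _
        have hne : (⟨i, u⟩ : Σ j, V j) ≠ ⟨j, v⟩ := fun h => hij (congrArg Sigma.fst h)
        refine ⟨hne, ?_⟩
        rintro ⟨l, t⟩
        refine ⟨hne, ?_⟩
        by_cases hli : l = i
        · subst hli
          rw [hAnat, hBnat, hAfor l t (fun h => hij h.symm) v,
              hBfor l t (fun h => hij h.symm) v]
          exact ⟨a l t u, ⟨le_refl _, hab l t u⟩, hLoa l t u, le_trans (hab l t u) (hbHi l t u)⟩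
        · by_cases hlj : l = j
          · subst hlj
            rw [hAnat, hBnat, hAfor l t (fun h => hli h.symm) u,
                hBfor l t (fun h => hli h.symm) u]
            exact ⟨a l t v, ⟨hLoa l t v, le_trans (hab l t v) (hbHi l t v)⟩,
              le_refl _, hab l t v⟩
          · rw [hAfor l t (fun h => hli h.symm) u, hBfor l t (fun h => hli h.symm) u,
                hAfor l t (fun h => hlj h.symm) v, hBfor l t (fun h => hlj h.symm) v]
            exact hhuge l t
      · intro _
        exact Or.inl hij
  · -- lower bound
    obtain ⟨I, hint, hrep⟩ :=
      Nat.sInf_mem (boxicity_set_nonempty (graphJoinFamily G))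
    choose A B hAB using hint
    set D : Fin n → Finset (Fin (boxicity (graphJoinFamily G))) := fun i =>
      Finset.univ.filter (fun t => ∃ u v : V i, u ≠ v ∧ ¬ (I t).Adj ⟨i, u⟩ ⟨i, v⟩) with hD
    have hdisj : ∀ i ∈ (Finset.univ : Finset (Fin n)), ∀ j ∈ Finset.univ, i ≠ j →
        Disjoint (D i) (D j) := by
      intro i _ j _ hij
      rw [Finset.disjoint_left]
      intro t hti htj
      rw [hD] at hti htj
      simp only [Finset.mem_filter, Finset.mem_univ, true_and] at hti htj
      obtain ⟨u, v, huv, hnuv⟩ := hti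
      obtain ⟨u', v', huv', hnuv'⟩ := htj
      have hneuv : (⟨i, u⟩ : Σ l, V l) ≠ ⟨i, v⟩ := by simp [huv]
      have hneuv' : (⟨j, u'⟩ : Σ l, V l) ≠ ⟨j, v'⟩ := by simp [huv']
      have d1 : ¬ (Icc (A t ⟨i, u⟩) (B t ⟨i, u⟩) ∩ Icc (A t ⟨i, v⟩) (B t ⟨i, v⟩)).Nonempty :=
        fun hN => hnuv ((hAB t _ _).mpr ⟨hneuv, hN⟩)
      have d2 : ¬ (Icc (A t ⟨j, u'⟩) (B t ⟨j, u'⟩) ∩ Icc (A t ⟨j, v'⟩) (B t ⟨j, v'⟩)).Nonempty :=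
        fun hN => hnuv' ((hAB t _ _).mpr ⟨hneuv', hN⟩)
      have adj : ∀ (x : V i) (y : V j),
          (Icc (A t ⟨i, x⟩) (B t ⟨i, x⟩) ∩ Icc (A t ⟨j, y⟩) (B t ⟨j, y⟩)).Nonempty := by
        intro x y
        have hadj : (graphJoinFamily G).Adj ⟨i, x⟩ ⟨j, y⟩ := Or.inl hij
        exact ((hAB t _ _).mp (((hrep _ _).mp hadj).2 t)).2
      exact interval_cross d1 d2 (adj u u') (adj u v') (adj v u') (adj v v')
    have hsum : ∑ i, (D i).card ≤ boxicity (graphJoinFamily G) := by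
      rw [← Finset.card_biUnion hdisj]
      exact le_trans (Finset.card_le_univ _) (by simp)
    refine le_trans (Finset.sum_le_sum ?_) hsum
    intro i _
    have hcard : Fintype.card (↥(D i)) = (D i).card := Fintype.card_coe _
    rw [← hcard]
    refine boxicity_le_card (ι := ↥(D i))
      (fun t => intervalGraph (fun w => A t.1 ⟨i, w⟩) (fun w => B t.1 ⟨i, w⟩))
      (fun t => isIntervalGraph_intervalGraph _ _) ?_
    intro u v
    constructor
    · intro hadj
      have hj : (graphJoinFamily G).Adj ⟨i, u⟩ ⟨i, v⟩ := Or.inr ⟨u, v, rfl, rfl, hadj⟩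
      obtain ⟨hne, hall⟩ := (hrep _ _).mp hj
      exact ⟨hadj.ne, fun t => ⟨hadj.ne, ((hAB t.1 _ _).mp (hall t.1)).2⟩⟩
    · rintro ⟨huv, hall⟩
      by_contra hG'
      have hne : (⟨i, u⟩ : Σ l, V l) ≠ ⟨i, v⟩ := by simp [huv]
      have hnadj : ¬ (graphJoinFamily G).Adj ⟨i, u⟩ ⟨i, v⟩ := by
        rw [graphJoinFamily_adj_same]
        exact hG'
      rw [hrep] at hnadj
      push_neg at hnadj
      obtain ⟨t, hnt⟩ := hnadj hne
      have htD : t ∈ D i := by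
        rw [hD]
        exact Finset.mem_filter.mpr ⟨Finset.mem_univ _, u, v, huv, hnt⟩
      exact hnt ((hAB t _ _).mpr ⟨hne, (hall ⟨t, htD⟩).2⟩)
end

section
/- For d ≥ 2, box(TC(H_d)) ≤ cub(TC(H_d)) ≤ d − 1. -/
/-!
Send a 0/1 vector `x` to the `d - 1` reals `f_k(x) = (x_0 + ⋯ + x_k)/(k+1) - x_{k+1}`. Each `f_k`
is linear, so comparable vectors `x ≤ y` give `f_k(y) - f_k(x)` = (a mean of 0/1 numbers) minus
(a 0/1 number), which lies in `[-1, 1]`. For incomparable `x, y`, say the first coordinate where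
they differ has `x_p < y_p`, and let `q > p` be the first coordinate with `y_q < x_q`; then with
`k = q - 1` the mean part of `f_k(y) - f_k(x)` is positive and the last part is `1`, so unit
intervals at `f_k(x)` and `f_k(y)` are disjoint.
-/

section UnitInterval

variable {V : Type*}

lemma Set.Icc_inter_Icc_add_one_nonempty_iff (p q : ℝ) :
    (Set.Icc p (p + 1) ∩ Set.Icc q (q + 1)).Nonempty ↔ |p - q| ≤ 1 := by
  rw [Set.Icc_inter_Icc, Set.nonempty_Icc, max_le_iff, le_min_iff, le_min_iff, abs_sub_le_iff]
  constructor
  · rintro ⟨⟨-, hpq⟩, hqp, -⟩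
    constructor <;> linarith
  · rintro ⟨hpq, hqp⟩
    refine ⟨⟨?_, ?_⟩, ?_, ?_⟩ <;> linarith

def unitIntervalGraph (a : V → ℝ) : SimpleGraph V where
  Adj u v := u ≠ v ∧ |a u - a v| ≤ 1
  symm := ⟨fun _ _ h => ⟨h.1.symm, by rw [abs_sub_comm]; exact h.2⟩⟩
  loopless := ⟨fun _ h => h.1 rfl⟩

lemma isUnitIntervalGraph_unitIntervalGraph (a : V → ℝ) :
    IsUnitIntervalGraph (unitIntervalGraph a) :=
  ⟨a, fun u v => by rw [Set.Icc_inter_Icc_add_one_nonempty_iff]; exact Iff.rfl⟩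

lemma IsUnitIntervalGraph.isIntervalGraph {I : SimpleGraph V} (h : IsUnitIntervalGraph I) :
    IsIntervalGraph I := by
  obtain ⟨a, ha⟩ := h
  exact ⟨a, fun v => a v + 1, ha⟩

variable {G : SimpleGraph V} {k : ℕ} (I : Fin k → SimpleGraph V)

lemma cubicity_le_of_adj_iff (hI : ∀ i, IsUnitIntervalGraph (I i))
    (hG : ∀ u v, G.Adj u v ↔ u ≠ v ∧ ∀ i, (I i).Adj u v) : cubicity G ≤ k :=
  Nat.sInf_le ⟨I, hI, hG⟩

lemma boxicity_le_cubicity_of_adj_iff (hI : ∀ i, IsUnitIntervalGraph (I i))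
    (hG : ∀ u v, G.Adj u v ↔ u ≠ v ∧ ∀ i, (I i).Adj u v) : boxicity G ≤ cubicity G := by
  have hmem : cubicity G ∈ {k | ∃ J : Fin k → SimpleGraph V, (∀ i, IsUnitIntervalGraph (J i)) ∧
      ∀ u v, G.Adj u v ↔ u ≠ v ∧ ∀ i, (J i).Adj u v} := Nat.sInf_mem ⟨k, I, hI, hG⟩
  obtain ⟨J, hJ, hGJ⟩ := hmem
  exact Nat.sInf_le ⟨J, fun i => (hJ i).isIntervalGraph, hGJ⟩

end UnitInterval

section PrefixMean

open Finset

noncomputable def prefixMeanSubNext (k : ℕ) (u : ℕ → ℝ) : ℝ :=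
  (∑ i ∈ range (k + 1), u i) / (k + 1) - u (k + 1)

variable (k : ℕ) {u a b : ℕ → ℝ}

lemma prefixMeanSubNext_sub_prefixMeanSubNext :
    prefixMeanSubNext k b - prefixMeanSubNext k a = prefixMeanSubNext k (b - a) := by
  simp only [prefixMeanSubNext, Pi.sub_apply, sum_sub_distrib]
  ring

lemma abs_prefixMeanSubNext_le_one (hu : ∀ n, u n ∈ Set.Icc 0 1) :
    |prefixMeanSubNext k u| ≤ 1 := by
  have hsum : ∑ i ∈ range (k + 1), u i ≤ k + 1 :=
    (sum_le_sum fun i _ => (hu i).2).trans (by simp)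
  have hmean_nonneg : 0 ≤ (∑ i ∈ range (k + 1), u i) / (k + 1) :=
    div_nonneg (sum_nonneg fun i _ => (hu i).1) (by positivity)
  have hmean_le : (∑ i ∈ range (k + 1), u i) / (k + 1) ≤ 1 :=
    (div_le_one (by positivity)).2 hsum
  obtain ⟨hnext_nonneg, hnext_le⟩ := hu (k + 1)
  rw [prefixMeanSubNext, abs_le]
  constructor <;> linarith

lemma one_lt_prefixMeanSubNext {p : ℕ} (hp : p ≤ k) (hnonneg : ∀ i ≤ k, 0 ≤ u i)
    (hpos : 0 < u p) (hnext : u (k + 1) ≤ -1) : 1 < prefixMeanSubNext k u := by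
  have hsum : 0 < ∑ i ∈ range (k + 1), u i :=
    sum_pos' (fun i hi => hnonneg i (Nat.lt_succ_iff.mp (mem_range.mp hi)))
      ⟨p, mem_range.mpr (Nat.lt_succ_of_le hp), hpos⟩
  have hmean : 0 < (∑ i ∈ range (k + 1), u i) / (k + 1) := div_pos hsum (by positivity)
  rw [prefixMeanSubNext]
  linarith

variable (ha : ∀ n, a n = 0 ∨ a n = 1) (hb : ∀ n, b n = 0 ∨ b n = 1)
include ha hb

lemma abs_prefixMeanSubNext_sub_le_one_of_le (hab : a ≤ b) :
    |prefixMeanSubNext k b - prefixMeanSubNext k a| ≤ 1 := by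
  rw [prefixMeanSubNext_sub_prefixMeanSubNext]
  refine abs_prefixMeanSubNext_le_one k fun n => ?_
  have := hab n
  rcases ha n with h | h <;> rcases hb n with h' | h' <;> simp_all

lemma exists_one_lt_abs_prefixMeanSubNext_sub (hab : ¬ a ≤ b) (hba : ¬ b ≤ a) :
    ∃ k, a (k + 1) ≠ b (k + 1) ∧ 1 < |prefixMeanSubNext k b - prefixMeanSubNext k a| := by
  have hP : ∃ n, a n < b n := by simpa [Pi.le_def] using hba
  have hQ : ∃ n, b n < a n := by simpa [Pi.le_def] using hab
  wlog hlt : Nat.find hP < Nat.find hQ generalizing a b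
  · have hne : Nat.find hP ≠ Nat.find hQ := fun h =>
      (Nat.find_spec hP).asymm (h ▸ Nat.find_spec hQ)
    obtain ⟨k, hk, hgt⟩ := this hb ha hba hab hQ hP (by omega)
    exact ⟨k, hk.symm, by rwa [abs_sub_comm]⟩
  obtain ⟨k, hk⟩ : ∃ k, Nat.find hQ = k + 1 := Nat.exists_eq_add_one.mpr (by omega)
  have hq := Nat.find_spec hQ
  rw [hk] at hq
  refine ⟨k, hq.ne', lt_of_lt_of_le ?_ (le_abs_self _)⟩
  rw [prefixMeanSubNext_sub_prefixMeanSubNext]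
  refine one_lt_prefixMeanSubNext k (p := Nat.find hP) (by omega) (fun i hi => ?_) ?_ ?_
  · exact sub_nonneg.mpr (not_lt.mp (Nat.find_min hQ (by omega)))
  · exact sub_pos.mpr (Nat.find_spec hP)
  · rw [Pi.sub_apply]
    rcases ha (k + 1) with h | h <;> rcases hb (k + 1) with h' | h' <;> rw [h, h'] at hq ⊢ <;>
      linarith

end PrefixMean

section Hypercube

variable {d : ℕ}

def coordSeq (x : Fin d → Fin 2) (n : ℕ) : ℝ :=
  if h : n < d then ((x ⟨n, h⟩ : ℕ) : ℝ) else 0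

lemma coordSeq_eq_zero_or_one (x : Fin d → Fin 2) (n : ℕ) :
    coordSeq x n = 0 ∨ coordSeq x n = 1 := by
  unfold coordSeq
  split_ifs with h
  · generalize x ⟨n, h⟩ = c
    fin_cases c <;> simp
  · exact Or.inl rfl

lemma coordSeq_eq_zero_of_le {n : ℕ} (x : Fin d → Fin 2) (hn : d ≤ n) : coordSeq x n = 0 :=
  dif_neg hn.not_gt

lemma coordSeq_le_coordSeq_iff {x y : Fin d → Fin 2} :
    coordSeq x ≤ coordSeq y ↔ ∀ i, (x i : ℕ) ≤ y i := by
  constructor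
  · intro h i
    simpa [coordSeq, i.isLt] using h i
  · intro h n
    unfold coordSeq
    split_ifs
    · exact Nat.cast_le.mpr (h _)
    · exact le_rfl

lemma comparable_iff_forall_abs_prefixMeanSubNext_sub_le_one (x y : Fin d → Fin 2) :
    ((∀ i, (x i : ℕ) ≤ y i) ∨ (∀ i, (y i : ℕ) ≤ x i)) ↔
      ∀ k : Fin (d - 1),
        |prefixMeanSubNext k (coordSeq x) - prefixMeanSubNext k (coordSeq y)| ≤ 1 := by
  have hx := coordSeq_eq_zero_or_one x
  have hy := coordSeq_eq_zero_or_one y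
  rw [← coordSeq_le_coordSeq_iff, ← coordSeq_le_coordSeq_iff]
  constructor
  · rintro (h | h) k
    · rw [abs_sub_comm]
      exact abs_prefixMeanSubNext_sub_le_one_of_le k hx hy h
    · exact abs_prefixMeanSubNext_sub_le_one_of_le k hy hx h
  · intro h
    by_contra! hinc
    obtain ⟨k, hne, hgt⟩ := exists_one_lt_abs_prefixMeanSubNext_sub hx hy hinc.1 hinc.2
    have hk : k + 1 < d := by
      by_contra! hk
      exact hne (by rw [coordSeq_eq_zero_of_le x hk, coordSeq_eq_zero_of_le y hk])
    exact (h ⟨k, by omega⟩).not_gt (by rwa [abs_sub_comm])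

end Hypercube

theorem boxicity_cubicity_TCH_upper_general (d : ℕ) :
    boxicity (TCH d) ≤ cubicity (TCH d) ∧ cubicity (TCH d) ≤ d - 1 := by
  set I : Fin (d - 1) → SimpleGraph (Fin d → Fin 2) :=
    fun k => unitIntervalGraph fun x => prefixMeanSubNext k (coordSeq x)
  have hI : ∀ k, IsUnitIntervalGraph (I k) := fun k => isUnitIntervalGraph_unitIntervalGraph _
  have hG : ∀ x y, (TCH d).Adj x y ↔ x ≠ y ∧ ∀ k, (I k).Adj x y := fun x y => by
    change x ≠ y ∧ _ ↔ x ≠ y ∧ ∀ k, x ≠ y ∧ _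
    rw [comparable_iff_forall_abs_prefixMeanSubNext_sub_le_one]
    constructor
    · exact fun ⟨hne, h⟩ => ⟨hne, fun k => ⟨hne, h k⟩⟩
    · exact fun ⟨hne, h⟩ => ⟨hne, fun k => (h k).2⟩
  exact ⟨boxicity_le_cubicity_of_adj_iff I hI hG, cubicity_le_of_adj_iff I hI hG⟩

theorem boxicity_cubicity_TCH_upper (d : ℕ) (hd : 2 ≤ d) :
    boxicity (TCH d) ≤ cubicity (TCH d) ∧ cubicity (TCH d) ≤ d - 1 :=
  boxicity_cubicity_TCH_upper_general d
end

section
/- For natural numbers m₁ ≤ m₂ ≤ m₃, box(TCC(m₁,m₂,m₃)) = cub(TCC(m₁,m₂,m₃)) = m₁ + m₂. -/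
section Aux

lemma icc_inter_nonempty {a b c d : ℝ} :
    (Set.Icc a b ∩ Set.Icc c d).Nonempty ↔ a ≤ b ∧ c ≤ d ∧ a ≤ d ∧ c ≤ b := by
  constructor
  · rintro ⟨x, ⟨h1, h2⟩, ⟨h3, h4⟩⟩
    exact ⟨le_trans h1 h2, le_trans h3 h4, le_trans h1 h4, le_trans h3 h2⟩
  · rintro ⟨h1, h2, h3, h4⟩
    exact ⟨max a c, ⟨⟨le_max_left _ _, max_le h1 h4⟩, ⟨le_max_right _ _, max_le h3 h2⟩⟩⟩

lemma four_sets {lx rx ly ry lx' rx' ly' ry' : ℝ}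
    (hxx' : (Set.Icc lx rx ∩ Set.Icc lx' rx').Nonempty)
    (hxy' : (Set.Icc lx rx ∩ Set.Icc ly' ry').Nonempty)
    (hyx' : (Set.Icc ly ry ∩ Set.Icc lx' rx').Nonempty)
    (hyy' : (Set.Icc ly ry ∩ Set.Icc ly' ry').Nonempty)
    (h1 : ¬ (Set.Icc lx rx ∩ Set.Icc ly ry).Nonempty)
    (h2 : ¬ (Set.Icc lx' rx' ∩ Set.Icc ly' ry').Nonempty) : False := by
  rw [icc_inter_nonempty] at hxx' hxy' hyx' hyy' h1 h2
  obtain ⟨nx, nx', a1, a2⟩ := hxx'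
  obtain ⟨-, ny', a3, a4⟩ := hxy'
  obtain ⟨ny, -, a5, a6⟩ := hyx'
  obtain ⟨-, -, a7, a8⟩ := hyy'
  have h1' : ry < lx ∨ rx < ly := by
    by_contra hc; push_neg at hc; exact h1 ⟨nx, ny, by linarith [hc.2], by linarith [hc.1]⟩
  have h2' : ry' < lx' ∨ rx' < ly' := by
    by_contra hc; push_neg at hc; exact h2 ⟨nx', ny', by linarith [hc.2], by linarith [hc.1]⟩
  rcases h1' with h1' | h1' <;> rcases h2' with h2' | h2' <;> linarith

lemma middle_real {loP hiP loM hiM loQ hiQ loW hiW : ℝ}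
    (hMne : loM ≤ hiM) (hPM : hiP < loM) (hMQ : hiM < loQ)
    (hWP : (Set.Icc loW hiW ∩ Set.Icc loP hiP).Nonempty)
    (hWQ : (Set.Icc loW hiW ∩ Set.Icc loQ hiQ).Nonempty) :
    (Set.Icc loW hiW ∩ Set.Icc loM hiM).Nonempty := by
  rw [icc_inter_nonempty] at hWP hWQ ⊢
  exact ⟨hWP.1, hMne, by linarith [hWP.2.2.1], by linarith [hWQ.2.2.2]⟩


def IRep {V : Type*} {ι : Type*} (G : SimpleGraph V) (A B : ι → V → ℝ) : Prop :=
  ∀ u v, G.Adj u v ↔ u ≠ v ∧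
    ∀ i, (Set.Icc (A i u) (B i u) ∩ Set.Icc (A i v) (B i v)).Nonempty

lemma rep_inter {V ι : Type*} {G : SimpleGraph V} {A B : ι → V → ℝ} (h : IRep G A B)
    {u v : V} (hadj : G.Adj u v) (i : ι) :
    (Set.Icc (A i u) (B i u) ∩ Set.Icc (A i v) (B i v)).Nonempty :=
  ((h u v).mp hadj).2 i

lemma rep_sep {V ι : Type*} {G : SimpleGraph V} {A B : ι → V → ℝ} (h : IRep G A B)
    {u v : V} (hne : u ≠ v) (hnadj : ¬ G.Adj u v) :
    ∃ i, ¬ (Set.Icc (A i u) (B i u) ∩ Set.Icc (A i v) (B i v)).Nonempty := by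
  by_contra hc; push_neg at hc; exact hnadj ((h u v).mpr ⟨hne, hc⟩)

def mkV (m f : Fin 3 → ℕ) (hf : ∀ i, f i ≤ m i) : (∀ i, Fin (m i + 1)) :=
  fun i => ⟨f i, Nat.lt_succ_of_le (hf i)⟩

lemma mkV_le {m f : Fin 3 → ℕ} {hf : ∀ i, f i ≤ m i} {δ : Fin 3 → ℕ}
    (h : ∀ i, f i ≤ δ i) : ∀ i, ((mkV m f hf i : ℕ)) ≤ δ i := h

lemma mkV_not_ge {m f : Fin 3 → ℕ} {hf : ∀ i, f i ≤ m i} {δ : Fin 3 → ℕ}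
    (h : ¬ ∀ i, δ i ≤ f i) : ¬ ∀ i, δ i ≤ ((mkV m f hf i : ℕ)) := h

lemma adj_mkV {m f g : Fin 3 → ℕ} {hf : ∀ i, f i ≤ m i} {hg : ∀ i, g i ≤ m i}
    (hfg : ∀ i, f i ≤ g i) (hne : ∃ i, f i ≠ g i) :
    (TCC m).Adj (mkV m f hf) (mkV m g hg) := by
  refine ⟨fun h => ?_, Or.inl fun i => hfg i⟩
  obtain ⟨i, hi⟩ := hne
  exact hi (congrArg (fun z => (z i : ℕ)) h)

lemma nadj_mkV {m f g : Fin 3 → ℕ} {hf : ∀ i, f i ≤ m i} {hg : ∀ i, g i ≤ m i}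
    (h1 : ∃ i, g i < f i) (h2 : ∃ i, f i < g i) :
    ¬ (TCC m).Adj (mkV m f hf) (mkV m g hg) := by
  rintro ⟨-, hc | hc⟩
  · obtain ⟨i, hi⟩ := h1; exact absurd (hc i) (Nat.not_le.mpr hi)
  · obtain ⟨i, hi⟩ := h2; exact absurd (hc i) (Nat.not_le.mpr hi)

lemma ne_mkV {m f g : Fin 3 → ℕ} {hf : ∀ i, f i ≤ m i} {hg : ∀ i, g i ≤ m i}
    (h : ∃ i, f i ≠ g i) : (mkV m f hf) ≠ (mkV m g hg) := by
  intro he; obtain ⟨i, hi⟩ := h; exact hi (congrArg (fun z => (z i : ℕ)) he)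

def emb {m m' δ : Fin 3 → ℕ} (hδ : ∀ i, m i = m' i + δ i)
    (x : ∀ i, Fin (m' i + 1)) : (∀ i, Fin (m i + 1)) :=
  fun i => ⟨(x i : ℕ) + δ i, by have := (x i).isLt; rw [hδ i]; omega⟩

lemma emb_val {m m' δ : Fin 3 → ℕ} (hδ : ∀ i, m i = m' i + δ i)
    (x : ∀ i, Fin (m' i + 1)) (i : Fin 3) : ((emb hδ x i : ℕ)) = (x i : ℕ) + δ i := rfl

lemma emb_ne {m m' δ : Fin 3 → ℕ} (hδ : ∀ i, m i = m' i + δ i)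
    {x y : ∀ i, Fin (m' i + 1)} (h : x ≠ y) : emb hδ x ≠ emb hδ y := by
  intro he; apply h; funext i
  have := congrArg (fun z => (z i : ℕ)) he
  simp only [emb_val] at this
  exact Fin.ext (by omega)

/-- Separation certificate inside the lower cell `{x | x ≤ δ}`. -/
def Lsep {m : Fin 3 → ℕ} {ι : Type*} (δ : Fin 3 → ℕ)
    (A B : ι → (∀ i, Fin (m i + 1)) → ℝ) (j : ι) : Prop :=
  ∃ x y : (∀ i, Fin (m i + 1)),
    (∀ i, (x i : ℕ) ≤ δ i) ∧ (∀ i, (y i : ℕ) ≤ δ i) ∧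
    (¬ ∀ i, δ i ≤ (x i : ℕ)) ∧ (¬ ∀ i, δ i ≤ (y i : ℕ)) ∧
    ¬ (Set.Icc (A j x) (B j x) ∩ Set.Icc (A j y) (B j y)).Nonempty

lemma reduce {m m' δ : Fin 3 → ℕ} (hδ : ∀ i, m i = m' i + δ i)
    {ι : Type*} {A B : ι → (∀ i, Fin (m i + 1)) → ℝ}
    (hrep : IRep (TCC m) A B) (bad : ι → Prop)
    (hbad : ∀ j, bad j → Lsep δ A B j) :
    IRep (TCC m') (fun (j : {j : ι // ¬ bad j}) x => A j.1 (emb hδ x))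
        (fun j x => B j.1 (emb hδ x)) := by
  intro u v
  constructor
  · rintro ⟨hne, hcmp⟩
    have hadj : (TCC m).Adj (emb hδ u) (emb hδ v) := by
      refine ⟨emb_ne hδ hne, ?_⟩
      rcases hcmp with hc | hc
      · exact Or.inl fun i => by simp only [emb_val]; exact Nat.add_le_add_right (hc i) _
      · exact Or.inr fun i => by simp only [emb_val]; exact Nat.add_le_add_right (hc i) _
    exact ⟨hne, fun j => rep_inter hrep hadj j.1⟩
  · rintro ⟨hne, hall⟩
    refine ⟨hne, ?_⟩
    by_contra hcmp
    have hcmp' : ¬ ((∀ i, ((emb hδ u) i : ℕ) ≤ ((emb hδ v) i : ℕ)) ∨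
        (∀ i, ((emb hδ v) i : ℕ) ≤ ((emb hδ u) i : ℕ))) := by
      intro hc; apply hcmp
      rcases hc with hc | hc
      · exact Or.inl fun i => by have := hc i; simp only [emb_val] at this; omega
      · exact Or.inr fun i => by have := hc i; simp only [emb_val] at this; omega
    obtain ⟨j0, hj0⟩ := rep_sep hrep (emb_ne hδ hne) (fun hadj => hcmp' hadj.2)
    by_cases hb : bad j0
    · obtain ⟨x, y, hx, hy, hx', hy', hdisj⟩ := hbad j0 hb
      have hxu : (TCC m).Adj x (emb hδ u) :=
        ⟨fun he => hx' fun i => by rw [he]; simp [emb_val],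
         Or.inl fun i => le_trans (hx i) (by simp [emb_val])⟩
      have hxv : (TCC m).Adj x (emb hδ v) :=
        ⟨fun he => hx' fun i => by rw [he]; simp [emb_val],
         Or.inl fun i => le_trans (hx i) (by simp [emb_val])⟩
      have hyu : (TCC m).Adj y (emb hδ u) :=
        ⟨fun he => hy' fun i => by rw [he]; simp [emb_val],
         Or.inl fun i => le_trans (hy i) (by simp [emb_val])⟩
      have hyv : (TCC m).Adj y (emb hδ v) :=
        ⟨fun he => hy' fun i => by rw [he]; simp [emb_val],
         Or.inl fun i => le_trans (hy i) (by simp [emb_val])⟩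
      exact four_sets (rep_inter hrep hxu j0) (rep_inter hrep hxv j0)
        (rep_inter hrep hyu j0) (rep_inter hrep hyv j0) hdisj hj0
    · exact hj0 (hall ⟨j0, hb⟩)

end Aux
section TwoSeps

variable {m : Fin 3 → ℕ} {ι : Type*} {A B : ι → (∀ i, Fin (m i + 1)) → ℝ}

lemma two_seps (hm : ∀ i, 1 ≤ m i) (hrep : IRep (TCC m) A B) :
    ∃ j₁ j₂ : ι, j₁ ≠ j₂ ∧ Lsep (fun _ => 1) A B j₁ ∧ Lsep (fun _ => 1) A B j₂ := by
  have bd : ∀ (f : Fin 3 → ℕ), (∀ i, f i ≤ 1) → ∀ i, f i ≤ m i :=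
    fun f hf i => le_trans (hf i) (hm i)
  -- the seven special vertices
  let vO := mkV m ![0,0,0] (bd _ (by decide))
  let vA := mkV m ![1,0,0] (bd _ (by decide))
  let vB := mkV m ![0,1,0] (bd _ (by decide))
  let vC := mkV m ![0,0,1] (bd _ (by decide))
  let wA := mkV m ![0,1,1] (bd _ (by decide))
  let wB := mkV m ![1,0,1] (bd _ (by decide))
  let wC := mkV m ![1,1,0] (bd _ (by decide))
  -- certificates
  have certAB : ∀ j : ι, ¬ (Set.Icc (A j vA) (B j vA) ∩ Set.Icc (A j vB) (B j vB)).Nonempty →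
      Lsep (fun _ => 1) A B j := fun j hj =>
    ⟨vA, vB, mkV_le (by decide), mkV_le (by decide), mkV_not_ge (by decide),
      mkV_not_ge (by decide), hj⟩
  have certAC : ∀ j : ι, ¬ (Set.Icc (A j vA) (B j vA) ∩ Set.Icc (A j vC) (B j vC)).Nonempty →
      Lsep (fun _ => 1) A B j := fun j hj =>
    ⟨vA, vC, mkV_le (by decide), mkV_le (by decide), mkV_not_ge (by decide),
      mkV_not_ge (by decide), hj⟩
  have certBC : ∀ j : ι, ¬ (Set.Icc (A j vB) (B j vB) ∩ Set.Icc (A j vC) (B j vC)).Nonempty →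
      Lsep (fun _ => 1) A B j := fun j hj =>
    ⟨vB, vC, mkV_le (by decide), mkV_le (by decide), mkV_not_ge (by decide),
      mkV_not_ge (by decide), hj⟩
  have certWA : ∀ j : ι, ¬ (Set.Icc (A j wA) (B j wA) ∩ Set.Icc (A j vA) (B j vA)).Nonempty →
      Lsep (fun _ => 1) A B j := fun j hj =>
    ⟨wA, vA, mkV_le (by decide), mkV_le (by decide), mkV_not_ge (by decide),
      mkV_not_ge (by decide), hj⟩
  have certWB : ∀ j : ι, ¬ (Set.Icc (A j wB) (B j wB) ∩ Set.Icc (A j vB) (B j vB)).Nonempty →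
      Lsep (fun _ => 1) A B j := fun j hj =>
    ⟨wB, vB, mkV_le (by decide), mkV_le (by decide), mkV_not_ge (by decide),
      mkV_not_ge (by decide), hj⟩
  have certWC : ∀ j : ι, ¬ (Set.Icc (A j wC) (B j wC) ∩ Set.Icc (A j vC) (B j vC)).Nonempty →
      Lsep (fun _ => 1) A B j := fun j hj =>
    ⟨wC, vC, mkV_le (by decide), mkV_le (by decide), mkV_not_ge (by decide),
      mkV_not_ge (by decide), hj⟩
  -- separators for the three pairwise-incomparable vertices
  obtain ⟨jab, hjab⟩ := rep_sep hrep (ne_mkV ⟨0, by decide⟩)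
    (nadj_mkV (f := ![1,0,0]) (g := ![0,1,0]) ⟨0, by decide⟩ ⟨1, by decide⟩)
  obtain ⟨jac, hjac⟩ := rep_sep hrep (ne_mkV ⟨0, by decide⟩)
    (nadj_mkV (f := ![1,0,0]) (g := ![0,0,1]) ⟨0, by decide⟩ ⟨2, by decide⟩)
  obtain ⟨jbc, hjbc⟩ := rep_sep hrep (ne_mkV ⟨1, by decide⟩)
    (nadj_mkV (f := ![0,1,0]) (g := ![0,0,1]) ⟨1, by decide⟩ ⟨2, by decide⟩)
  rcases eq_or_ne jac jab with rfl | hne1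
  swap
  · exact ⟨jac, jab, hne1, certAC _ hjac, certAB _ hjab⟩
  rcases eq_or_ne jbc jac with rfl | hne2
  swap
  · exact ⟨jbc, jac, hne2, certBC _ hjbc, certAC _ hjac⟩
  -- now all three pairs are separated at the same index `jbc`
  -- nonemptiness of the three intervals
  have nA : A jbc vA ≤ B jbc vA :=
    (icc_inter_nonempty.mp (rep_inter hrep
      (adj_mkV (f := ![0,0,0]) (g := ![1,0,0]) (hf := bd _ (by decide)) (hg := bd _ (by decide))
        (by decide) ⟨0, by decide⟩) jbc)).2.1
  have nB : A jbc vB ≤ B jbc vB :=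
    (icc_inter_nonempty.mp (rep_inter hrep
      (adj_mkV (f := ![0,0,0]) (g := ![0,1,0]) (hf := bd _ (by decide)) (hg := bd _ (by decide))
        (by decide) ⟨1, by decide⟩) jbc)).2.1
  have nC : A jbc vC ≤ B jbc vC :=
    (icc_inter_nonempty.mp (rep_inter hrep
      (adj_mkV (f := ![0,0,0]) (g := ![0,0,1]) (hf := bd _ (by decide)) (hg := bd _ (by decide))
        (by decide) ⟨2, by decide⟩) jbc)).2.1
  -- strict disjointness facts
  have dAB : B jbc vA < A jbc vB ∨ B jbc vB < A jbc vA := by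
    by_contra hc; push_neg at hc
    exact hjab (icc_inter_nonempty.mpr ⟨nA, nB, hc.2, hc.1⟩)
  have dAC : B jbc vA < A jbc vC ∨ B jbc vC < A jbc vA := by
    by_contra hc; push_neg at hc
    exact hjac (icc_inter_nonempty.mpr ⟨nA, nC, hc.2, hc.1⟩)
  have dBC : B jbc vB < A jbc vC ∨ B jbc vC < A jbc vB := by
    by_contra hc; push_neg at hc
    exact hjbc (icc_inter_nonempty.mpr ⟨nB, nC, hc.2, hc.1⟩)
  -- adjacencies of the w-vertices to the two outer vertices
  have aWAB : (TCC m).Adj wA vB :=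
    ((adj_mkV (f := ![0,1,0]) (g := ![0,1,1]) (hf := bd _ (by decide)) (hg := bd _ (by decide)) (by decide) ⟨2, by decide⟩)).symm
  have aWAC : (TCC m).Adj wA vC :=
    ((adj_mkV (f := ![0,0,1]) (g := ![0,1,1]) (hf := bd _ (by decide)) (hg := bd _ (by decide)) (by decide) ⟨1, by decide⟩)).symm
  have aWBA : (TCC m).Adj wB vA :=
    ((adj_mkV (f := ![1,0,0]) (g := ![1,0,1]) (hf := bd _ (by decide)) (hg := bd _ (by decide)) (by decide) ⟨2, by decide⟩)).symm
  have aWBC : (TCC m).Adj wB vC :=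
    ((adj_mkV (f := ![0,0,1]) (g := ![1,0,1]) (hf := bd _ (by decide)) (hg := bd _ (by decide)) (by decide) ⟨0, by decide⟩)).symm
  have aWCA : (TCC m).Adj wC vA :=
    ((adj_mkV (f := ![1,0,0]) (g := ![1,1,0]) (hf := bd _ (by decide)) (hg := bd _ (by decide)) (by decide) ⟨1, by decide⟩)).symm
  have aWCB : (TCC m).Adj wC vB :=
    ((adj_mkV (f := ![0,1,0]) (g := ![1,1,0]) (hf := bd _ (by decide)) (hg := bd _ (by decide)) (by decide) ⟨0, by decide⟩)).symm
  -- separators for the partner pairs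
  obtain ⟨ja, hja⟩ := rep_sep hrep (ne_mkV ⟨0, by decide⟩)
    (nadj_mkV (f := ![0,1,1]) (g := ![1,0,0]) ⟨1, by decide⟩ ⟨0, by decide⟩)
  obtain ⟨jb, hjb⟩ := rep_sep hrep (ne_mkV ⟨0, by decide⟩)
    (nadj_mkV (f := ![1,0,1]) (g := ![0,1,0]) ⟨0, by decide⟩ ⟨1, by decide⟩)
  obtain ⟨jc, hjc⟩ := rep_sep hrep (ne_mkV ⟨0, by decide⟩)
    (nadj_mkV (f := ![1,1,0]) (g := ![0,0,1]) ⟨0, by decide⟩ ⟨2, by decide⟩)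
  -- case analysis on the linear order of the three disjoint intervals at `jbc`
  rcases dAB with hab | hab <;> rcases dAC with hac | hac <;> rcases dBC with hbc | hbc
  -- (1) A < B < C : middle vB, witness wB
  · have hWM := middle_real nB hab hbc (rep_inter hrep aWBA jbc) (rep_inter hrep aWBC jbc)
    rcases eq_or_ne jb jbc with rfl | hne
    · exact absurd hWM hjb
    · exact ⟨jbc, jb, Ne.symm hne, certAB _ hjab, certWB _ hjb⟩
  -- (2) A < C < B : middle vC, witness wC
  · have hWM := middle_real nC hac hbc (rep_inter hrep aWCA jbc) (rep_inter hrep aWCB jbc)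
    rcases eq_or_ne jc jbc with rfl | hne
    · exact absurd hWM hjc
    · exact ⟨jbc, jc, Ne.symm hne, certAB _ hjab, certWC _ hjc⟩
  -- (3) cycle : impossible
  · exfalso; linarith
  -- (4) C < A < B : middle vA, witness wA
  · have hWM := middle_real nA hac hab (rep_inter hrep aWAC jbc) (rep_inter hrep aWAB jbc)
    rcases eq_or_ne ja jbc with rfl | hne
    · exact absurd hWM hja
    · exact ⟨jbc, ja, Ne.symm hne, certAB _ hjab, certWA _ hja⟩
  -- (5) B < A < C : middle vA, witness wA
  · have hWM := middle_real nA hab hac (rep_inter hrep aWAB jbc) (rep_inter hrep aWAC jbc)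
    rcases eq_or_ne ja jbc with rfl | hne
    · exact absurd hWM hja
    · exact ⟨jbc, ja, Ne.symm hne, certAB _ hjab, certWA _ hja⟩
  -- (6) cycle : impossible
  · exfalso; linarith
  -- (7) B < C < A : middle vC, witness wC
  · have hWM := middle_real nC hbc hac (rep_inter hrep aWCB jbc) (rep_inter hrep aWCA jbc)
    rcases eq_or_ne jc jbc with rfl | hne
    · exact absurd hWM hjc
    · exact ⟨jbc, jc, Ne.symm hne, certAB _ hjab, certWC _ hjc⟩
  -- (8) C < B < A : middle vB, witness wB
  · have hWM := middle_real nB hbc hab (rep_inter hrep aWBC jbc) (rep_inter hrep aWBA jbc)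
    rcases eq_or_ne jb jbc with rfl | hne
    · exact absurd hWM hjb
    · exact ⟨jbc, jb, Ne.symm hne, certAB _ hjab, certWB _ hjb⟩

end TwoSeps
section Induction

lemma card_compl_one {ι : Type*} [Fintype ι] (j₁ : ι) [Fintype {j : ι // ¬ j = j₁}] :
    Fintype.card {j : ι // ¬ j = j₁} + 1 = Fintype.card ι := by
  classical
  have h1 : Fintype.card {j : ι // j = j₁} = 1 := Fintype.card_subtype_eq j₁
  have h2 := Fintype.card_subtype_compl (fun j : ι => j = j₁)
  have h3 : 0 < Fintype.card ι := Fintype.card_pos_iff.mpr ⟨j₁⟩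
  omega

lemma card_compl_two {ι : Type*} [Fintype ι] (j₁ j₂ : ι) (hne : j₁ ≠ j₂)
    [Fintype {j : ι // ¬ (j = j₁ ∨ j = j₂)}] :
    Fintype.card {j : ι // ¬ (j = j₁ ∨ j = j₂)} + 2 = Fintype.card ι := by
  classical
  have h1 : Fintype.card {j : ι // j = j₁ ∨ j = j₂} = 2 := by
    have hd : Disjoint (fun j : ι => j = j₁) (fun j : ι => j = j₂) := by
      simp only [Pi.disjoint_iff]
      intro j
      rw [Prop.disjoint_iff]
      rintro ⟨rfl, h2⟩
      exact hne h2
    rw [Fintype.card_subtype_or_disjoint _ _ hd, Fintype.card_subtype_eq, Fintype.card_subtype_eq]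
  have h2 := Fintype.card_subtype_compl (fun j : ι => j = j₁ ∨ j = j₂)
  have h3 : 1 < Fintype.card ι := Fintype.one_lt_card_iff.mpr ⟨j₁, j₂, hne⟩
  omega

theorem lower_ind : ∀ (M₂ m₁ m₃ : ℕ), m₁ ≤ M₂ → M₂ ≤ m₃ →
    ∀ (ι : Type) [Fintype ι] (A B : ι → (∀ i, Fin ((![m₁, M₂, m₃] : Fin 3 → ℕ) i + 1)) → ℝ),
      IRep (TCC ![m₁, M₂, m₃]) A B → m₁ + M₂ ≤ Fintype.card ι := by
  intro M₂
  induction M₂ with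
  | zero => intro m₁ m₃ h12 _ ι _ A B _; omega
  | succ M ih =>
    intro m₁ m₃ h12 h23 ι inst A B hrep
    obtain ⟨M₃, rfl⟩ : ∃ M₃, m₃ = M₃ + 1 := ⟨m₃ - 1, by omega⟩
    classical
    cases m₁ with
    | zero =>
      -- grid case: remove one index using the pair (0,1,0),(0,0,1)
      have hδ : ∀ i, (![0, M+1, M₃+1] : Fin 3 → ℕ) i = (![0, M, M₃] : Fin 3 → ℕ) i
          + (![0,1,1] : Fin 3 → ℕ) i := by intro i; fin_cases i <;> rfl
      have bd1 : ∀ i, (![0,1,0] : Fin 3 → ℕ) i ≤ ![0, M+1, M₃+1] i := by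
        intro i; fin_cases i <;> simp
      have bd2 : ∀ i, (![0,0,1] : Fin 3 → ℕ) i ≤ ![0, M+1, M₃+1] i := by
        intro i; fin_cases i <;> simp
      obtain ⟨j₁, hj₁⟩ := rep_sep hrep
        (ne_mkV (hf := bd1) (hg := bd2) ⟨1, by decide⟩)
        (nadj_mkV (hf := bd1) (hg := bd2) ⟨1, by decide⟩ ⟨2, by decide⟩)
      have hred := reduce hδ hrep (fun j => j = j₁) ?_
      · have hc := ih 0 M₃ (Nat.zero_le _) (by omega) {j : ι // ¬ j = j₁} _ _ hred
        have := card_compl_one j₁ (ι := ι)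
        omega
      · rintro j rfl
        exact ⟨_, _, mkV_le (hf := bd1) (by decide), mkV_le (hf := bd2) (by decide),
          mkV_not_ge (hf := bd1) (by decide), mkV_not_ge (hf := bd2) (by decide), hj₁⟩
    | succ N =>
      have hδ : ∀ i, (![N+1, M+1, M₃+1] : Fin 3 → ℕ) i = (![N, M, M₃] : Fin 3 → ℕ) i
          + (fun _ => 1) i := by intro i; fin_cases i <;> rfl
      have hm : ∀ i, 1 ≤ (![N+1, M+1, M₃+1] : Fin 3 → ℕ) i := by
        intro i; fin_cases i <;> simp
      obtain ⟨j₁, j₂, hj, L1, L2⟩ := two_seps hm hrep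
      have hred := reduce hδ hrep (fun j => j = j₁ ∨ j = j₂)
        (by rintro j (rfl | rfl); exacts [L1, L2])
      have hc := ih N M₃ (by omega) (by omega) {j : ι // ¬ (j = j₁ ∨ j = j₂)} _ _ hred
      have := card_compl_two j₁ j₂ hj (ι := ι)
      omega

end Induction
section Upper

/-- A unit-interval graph built from left endpoints `f`. -/
def unitG {V : Type*} (f : V → ℝ) : SimpleGraph V where
  Adj u v := u ≠ v ∧ (Set.Icc (f u) (f u + 1) ∩ Set.Icc (f v) (f v + 1)).Nonempty
  symm := ⟨fun u v h => ⟨h.1.symm, by rw [Set.inter_comm]; exact h.2⟩⟩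
  loopless := ⟨fun u h => h.1 rfl⟩

lemma unitG_isUnit {V : Type*} (f : V → ℝ) : IsUnitIntervalGraph (unitG f) :=
  ⟨f, fun _ _ => Iff.rfl⟩

lemma unitG_adj {V : Type*} (f : V → ℝ) (u v : V) :
    (unitG f).Adj u v ↔ u ≠ v ∧ |f u - f v| ≤ 1 := by
  show (u ≠ v ∧ _) ↔ _
  rw [icc_inter_nonempty, abs_sub_le_iff]
  constructor
  · rintro ⟨h, -, -, h3, h4⟩; exact ⟨h, by linarith, by linarith⟩
  · rintro ⟨h, h1, h2⟩; exact ⟨h, by linarith, by linarith, by linarith, by linarith⟩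

variable (m₁ m₂ m₃ : ℕ)

/-- The unit-interval representation functions for `TCC ![m₁, m₂, m₃]`. -/
noncomputable def fIdx (i : ℕ) (x : ∀ i, Fin ((![m₁, m₂, m₃] : Fin 3 → ℕ) i + 1)) : ℝ :=
  if i < m₁ then
    (if i < (x 0 : ℕ) then 1 else 0) - (((x 1 : ℕ) : ℝ) + ((x 2 : ℕ) : ℝ)) / ((m₂ : ℝ) + m₃ + 1)
  else
    (if i - m₁ < (x 1 : ℕ) then 1 else 0) - ((x 2 : ℕ) : ℝ) / ((m₂ : ℝ) + m₃ + 1)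

lemma coordb0 (x : ∀ i, Fin ((![m₁, m₂, m₃] : Fin 3 → ℕ) i + 1)) : (x 0 : ℕ) ≤ m₁ :=
  Nat.lt_succ_iff.mp (x 0).isLt
lemma coordb1 (x : ∀ i, Fin ((![m₁, m₂, m₃] : Fin 3 → ℕ) i + 1)) : (x 1 : ℕ) ≤ m₂ :=
  Nat.lt_succ_iff.mp (x 1).isLt
lemma coordb2 (x : ∀ i, Fin ((![m₁, m₂, m₃] : Fin 3 → ℕ) i + 1)) : (x 2 : ℕ) ≤ m₃ :=
  Nat.lt_succ_iff.mp (x 2).isLt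

lemma f_close (i : ℕ) {u v : ∀ i, Fin ((![m₁, m₂, m₃] : Fin 3 → ℕ) i + 1)}
    (huv : ∀ t, (u t : ℕ) ≤ (v t : ℕ)) :
    |fIdx m₁ m₂ m₃ i u - fIdx m₁ m₂ m₃ i v| ≤ 1 := by
  have hD : (0 : ℝ) < (m₂ : ℝ) + m₃ + 1 := by positivity
  have c1u : ((u 1 : ℕ) : ℝ) ≤ ((v 1 : ℕ) : ℝ) := Nat.cast_le.mpr (huv 1)
  have c2u : ((u 2 : ℕ) : ℝ) ≤ ((v 2 : ℕ) : ℝ) := Nat.cast_le.mpr (huv 2)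
  have b1 : ((v 1 : ℕ) : ℝ) ≤ m₂ := Nat.cast_le.mpr (coordb1 m₁ m₂ m₃ v)
  have b2 : ((v 2 : ℕ) : ℝ) ≤ m₃ := Nat.cast_le.mpr (coordb2 m₁ m₂ m₃ v)
  have n1 : (0 : ℝ) ≤ ((u 1 : ℕ) : ℝ) := Nat.cast_nonneg _
  have n2 : (0 : ℝ) ≤ ((u 2 : ℕ) : ℝ) := Nat.cast_nonneg _
  have hd1a : (0:ℝ) ≤ (((v 1 : ℕ) : ℝ) + ((v 2 : ℕ) : ℝ)) / ((m₂ : ℝ) + m₃ + 1)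
      - (((u 1 : ℕ) : ℝ) + ((u 2 : ℕ) : ℝ)) / ((m₂ : ℝ) + m₃ + 1) := by
    rw [div_sub_div_same]; exact div_nonneg (by linarith) (le_of_lt hD)
  have hd2a : (((v 1 : ℕ) : ℝ) + ((v 2 : ℕ) : ℝ)) / ((m₂ : ℝ) + m₃ + 1)
      - (((u 1 : ℕ) : ℝ) + ((u 2 : ℕ) : ℝ)) / ((m₂ : ℝ) + m₃ + 1) ≤ 1 := by
    rw [div_sub_div_same]; exact (div_le_one hD).mpr (by linarith)
  have hd1b : (0:ℝ) ≤ ((v 2 : ℕ) : ℝ) / ((m₂ : ℝ) + m₃ + 1)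
      - ((u 2 : ℕ) : ℝ) / ((m₂ : ℝ) + m₃ + 1) := by
    rw [div_sub_div_same]; exact div_nonneg (by linarith) (le_of_lt hD)
  have hd2b : ((v 2 : ℕ) : ℝ) / ((m₂ : ℝ) + m₃ + 1)
      - ((u 2 : ℕ) : ℝ) / ((m₂ : ℝ) + m₃ + 1) ≤ 1 := by
    rw [div_sub_div_same]; exact (div_le_one hD).mpr (by linarith)
  have h0 := huv 0
  have h1 := huv 1
  unfold fIdx
  split_ifs
  all_goals try (exfalso; omega)
  all_goals rw [abs_le]; constructor <;> linarith

lemma f_farB {u v : ∀ i, Fin ((![m₁, m₂, m₃] : Fin 3 → ℕ) i + 1)}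
    (h1 : (u 1 : ℕ) < (v 1 : ℕ)) (h2 : (v 2 : ℕ) < (u 2 : ℕ)) :
    1 < |fIdx m₁ m₂ m₃ (m₁ + (u 1 : ℕ)) u - fIdx m₁ m₂ m₃ (m₁ + (u 1 : ℕ)) v| ∧
      m₁ + (u 1 : ℕ) < m₁ + m₂ := by
  have hD : (0 : ℝ) < (m₂ : ℝ) + m₃ + 1 := by positivity
  constructor
  · have hni : ¬ (m₁ + (u 1 : ℕ) < m₁) := by omega
    have he : m₁ + (u 1 : ℕ) - m₁ = (u 1 : ℕ) := by omega
    unfold fIdx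
    rw [if_neg hni, if_neg hni, he, if_neg (lt_irrefl _), if_pos h1]
    have hc : ((v 2 : ℕ) : ℝ) / ((m₂ : ℝ) + m₃ + 1) - ((u 2 : ℕ) : ℝ) / ((m₂ : ℝ) + m₃ + 1)
        < 0 := by
      rw [div_sub_div_same]
      exact div_neg_of_neg_of_pos (by have := Nat.cast_lt (α := ℝ).mpr h2; linarith) hD
    rw [lt_abs]; right; linarith
  · have := coordb1 m₁ m₂ m₃ v; omega

lemma f_farA {u v : ∀ i, Fin ((![m₁, m₂, m₃] : Fin 3 → ℕ) i + 1)}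
    (h0 : (u 0 : ℕ) < (v 0 : ℕ)) (hs : (v 1 : ℕ) + (v 2 : ℕ) < (u 1 : ℕ) + (u 2 : ℕ)) :
    1 < |fIdx m₁ m₂ m₃ (u 0 : ℕ) u - fIdx m₁ m₂ m₃ (u 0 : ℕ) v| ∧ (u 0 : ℕ) < m₁ + m₂ := by
  have hD : (0 : ℝ) < (m₂ : ℝ) + m₃ + 1 := by positivity
  have hi : (u 0 : ℕ) < m₁ := lt_of_lt_of_le h0 (coordb0 m₁ m₂ m₃ v)
  constructor
  · unfold fIdx
    rw [if_pos hi, if_pos hi, if_neg (lt_irrefl _), if_pos h0]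
    have hc : (((v 1 : ℕ) : ℝ) + ((v 2 : ℕ) : ℝ)) / ((m₂ : ℝ) + m₃ + 1)
        - (((u 1 : ℕ) : ℝ) + ((u 2 : ℕ) : ℝ)) / ((m₂ : ℝ) + m₃ + 1) < 0 := by
      rw [div_sub_div_same]
      refine div_neg_of_neg_of_pos ?_ hD
      have : ((v 1 : ℕ) : ℝ) + ((v 2 : ℕ) : ℝ) < ((u 1 : ℕ) : ℝ) + ((u 2 : ℕ) : ℝ) := by
        have := Nat.cast_lt (α := ℝ).mpr hs; push_cast at this ⊢; linarith
      linarith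
    rw [lt_abs]; right; linarith
  · omega

lemma cub_mem :
    ∃ I : Fin (m₁ + m₂) → SimpleGraph (∀ i, Fin ((![m₁, m₂, m₃] : Fin 3 → ℕ) i + 1)),
      (∀ i, IsUnitIntervalGraph (I i)) ∧
      ∀ u v, (TCC ![m₁, m₂, m₃]).Adj u v ↔ (u ≠ v ∧ ∀ i, (I i).Adj u v) := by
  refine ⟨fun i => unitG (fIdx m₁ m₂ m₃ (i : ℕ)), fun i => unitG_isUnit _, ?_⟩
  intro u v
  constructor
  · rintro ⟨hne, hcmp⟩
    refine ⟨hne, fun i => (unitG_adj _ u v).mpr ⟨hne, ?_⟩⟩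
    rcases hcmp with hc | hc
    · exact f_close m₁ m₂ m₃ _ hc
    · rw [abs_sub_comm]; exact f_close m₁ m₂ m₃ _ hc
  · rintro ⟨hne, hall⟩
    refine ⟨hne, ?_⟩
    by_contra hcmp
    push_neg at hcmp
    obtain ⟨⟨i₀, hi₀⟩, ⟨i₁, hi₁⟩⟩ := hcmp
    have main : ∃ t : ℕ, t < m₁ + m₂ ∧ 1 < |fIdx m₁ m₂ m₃ t u - fIdx m₁ m₂ m₃ t v| := by
      by_cases hA : (u 1 : ℕ) < (v 1 : ℕ) ∧ (v 2 : ℕ) < (u 2 : ℕ)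
      · obtain ⟨hf, hb⟩ := f_farB m₁ m₂ m₃ hA.1 hA.2
        exact ⟨_, hb, hf⟩
      by_cases hB : (v 1 : ℕ) < (u 1 : ℕ) ∧ (u 2 : ℕ) < (v 2 : ℕ)
      · obtain ⟨hf, hb⟩ := f_farB m₁ m₂ m₃ (u := v) (v := u) hB.1 hB.2
        exact ⟨_, hb, by rwa [abs_sub_comm]⟩
      have H0 : (v 0 : ℕ) < u 0 ∨ (v 1 : ℕ) < u 1 ∨ (v 2 : ℕ) < u 2 := by
        fin_cases i₀
        · exact Or.inl hi₀
        · exact Or.inr (Or.inl hi₀)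
        · exact Or.inr (Or.inr hi₀)
      have H1 : (u 0 : ℕ) < v 0 ∨ (u 1 : ℕ) < v 1 ∨ (u 2 : ℕ) < v 2 := by
        fin_cases i₁
        · exact Or.inl hi₁
        · exact Or.inr (Or.inl hi₁)
        · exact Or.inr (Or.inr hi₁)
      have key : ((u 0 : ℕ) < (v 0 : ℕ) ∧ (v 1 : ℕ) + (v 2 : ℕ) < (u 1 : ℕ) + (u 2 : ℕ)) ∨
          ((v 0 : ℕ) < (u 0 : ℕ) ∧ (u 1 : ℕ) + (u 2 : ℕ) < (v 1 : ℕ) + (v 2 : ℕ)) := by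
        omega
      rcases key with ⟨k0, k1⟩ | ⟨k0, k1⟩
      · obtain ⟨hf, hb⟩ := f_farA m₁ m₂ m₃ k0 k1
        exact ⟨_, hb, hf⟩
      · obtain ⟨hf, hb⟩ := f_farA m₁ m₂ m₃ (u := v) (v := u) k0 k1
        exact ⟨_, hb, by rwa [abs_sub_comm]⟩
    obtain ⟨t, ht, hfar⟩ := main
    have hadj := (unitG_adj _ u v).mp (hall ⟨t, ht⟩)
    have hle : |fIdx m₁ m₂ m₃ t u - fIdx m₁ m₂ m₃ t v| ≤ 1 := hadj.2
    linarith

end Upper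

section Assembly

lemma box_lower (m₁ m₂ m₃ : ℕ) (h12 : m₁ ≤ m₂) (h23 : m₂ ≤ m₃) (k : ℕ)
    (hk : ∃ I : Fin k → SimpleGraph (∀ i, Fin ((![m₁, m₂, m₃] : Fin 3 → ℕ) i + 1)),
      (∀ i, IsIntervalGraph (I i)) ∧
      ∀ u v, (TCC ![m₁, m₂, m₃]).Adj u v ↔ (u ≠ v ∧ ∀ i, (I i).Adj u v)) :
    m₁ + m₂ ≤ k := by
  obtain ⟨I, hI, hrep⟩ := hk
  choose A B hAB using hI
  have hR : IRep (TCC ![m₁, m₂, m₃]) A B := by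
    intro u v
    rw [hrep u v]
    constructor
    · rintro ⟨hne, h⟩; exact ⟨hne, fun i => ((hAB i u v).mp (h i)).2⟩
    · rintro ⟨hne, h⟩; exact ⟨hne, fun i => (hAB i u v).mpr ⟨hne, h i⟩⟩
  have := lower_ind m₂ m₁ m₃ h12 h23 (Fin k) A B hR
  simpa using this

lemma cub_to_box (m₁ m₂ m₃ : ℕ) (k : ℕ)
    (hk : ∃ I : Fin k → SimpleGraph (∀ i, Fin ((![m₁, m₂, m₃] : Fin 3 → ℕ) i + 1)),
      (∀ i, IsUnitIntervalGraph (I i)) ∧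
      ∀ u v, (TCC ![m₁, m₂, m₃]).Adj u v ↔ (u ≠ v ∧ ∀ i, (I i).Adj u v)) :
    ∃ I : Fin k → SimpleGraph (∀ i, Fin ((![m₁, m₂, m₃] : Fin 3 → ℕ) i + 1)),
      (∀ i, IsIntervalGraph (I i)) ∧
      ∀ u v, (TCC ![m₁, m₂, m₃]).Adj u v ↔ (u ≠ v ∧ ∀ i, (I i).Adj u v) := by
  obtain ⟨I, hU, hrep⟩ := hk
  refine ⟨I, fun i => ?_, hrep⟩
  obtain ⟨a, ha⟩ := hU i
  exact ⟨a, fun v => a v + 1, ha⟩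

end Assembly

theorem boxicity_cubicity_TCC_three (m₁ m₂ m₃ : ℕ) (h12 : m₁ ≤ m₂) (h23 : m₂ ≤ m₃) :
    boxicity (TCC ![m₁, m₂, m₃]) = m₁ + m₂ ∧ cubicity (TCC ![m₁, m₂, m₃]) = m₁ + m₂ := by
  have hmem_cub : (m₁ + m₂) ∈ {k | ∃ I : Fin k →
      SimpleGraph (∀ i, Fin ((![m₁, m₂, m₃] : Fin 3 → ℕ) i + 1)),
      (∀ i, IsUnitIntervalGraph (I i)) ∧
      ∀ u v, (TCC ![m₁, m₂, m₃]).Adj u v ↔ (u ≠ v ∧ ∀ i, (I i).Adj u v)} :=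
    cub_mem m₁ m₂ m₃
  have hmem_box : (m₁ + m₂) ∈ {k | ∃ I : Fin k →
      SimpleGraph (∀ i, Fin ((![m₁, m₂, m₃] : Fin 3 → ℕ) i + 1)),
      (∀ i, IsIntervalGraph (I i)) ∧
      ∀ u v, (TCC ![m₁, m₂, m₃]).Adj u v ↔ (u ≠ v ∧ ∀ i, (I i).Adj u v)} :=
    cub_to_box m₁ m₂ m₃ _ hmem_cub
  constructor
  · unfold boxicity
    apply le_antisymm
    · exact Nat.sInf_le hmem_box
    · exact box_lower m₁ m₂ m₃ h12 h23 _ (Nat.sInf_mem ⟨m₁ + m₂, hmem_box⟩)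
  · unfold cubicity
    apply le_antisymm
    · exact Nat.sInf_le hmem_cub
    · exact box_lower m₁ m₂ m₃ h12 h23 _
        (cub_to_box m₁ m₂ m₃ _ (Nat.sInf_mem ⟨m₁ + m₂, hmem_cub⟩))
end

section
/- Let m₁ ≤ m₂ ≤ ⋯ ≤ m_d (d ≥ 2) and let f(s) denote box(TC(H_s)) with f(1) interpreted as 0. Then box(TCC(m₁,…,m_d)) ≥ m₁·f(d) + (m₂−m₁)·f(d−1) + (m₃−m₂)·f(d−2) + ⋯ + (m_{d−1}−m_{d−2})·f(2). -/
open Set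

section Aux

lemma interval_cross_s17 {au bu av bv ax bx ay by' : ℝ}
    (hux : (Icc au bu ∩ Icc ax bx).Nonempty)
    (huy : (Icc au bu ∩ Icc ay by').Nonempty)
    (hvx : (Icc av bv ∩ Icc ax bx).Nonempty)
    (hvy : (Icc av bv ∩ Icc ay by').Nonempty)
    (huv : ¬ (Icc au bu ∩ Icc av bv).Nonempty) :
    (Icc ax bx ∩ Icc ay by').Nonempty := by
  obtain ⟨p, hp1, hp2⟩ := hux
  obtain ⟨q, hq1, hq2⟩ := huy
  obtain ⟨r, hr1, hr2⟩ := hvx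
  obtain ⟨s, hs1, hs2⟩ := hvy
  simp only [Set.mem_Icc] at *
  rcases le_or_gt av bu with h | h
  · rcases le_or_gt au bv with h2 | h2
    · exact absurd ⟨max au av, ⟨le_max_left _ _, (max_le (le_trans hp1.1 hp1.2) h)⟩,
        ⟨le_max_right _ _, max_le h2 (le_trans hr1.1 hr1.2)⟩⟩ huv
    · exact ⟨au, ⟨by linarith [hr2.1, hr2.2, hp2.1, hp2.2], by linarith⟩,
        ⟨by linarith [hs2.1, hs2.2], by linarith [hq2.1, hq2.2]⟩⟩
  · exact ⟨av, ⟨by linarith [hp2.1, hp2.2, hr2.1], by linarith [hr2.2]⟩,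
      ⟨by linarith [hq2.1, hq2.2], by linarith [hs2.2, hs2.1]⟩⟩

lemma TCH_adj {s : ℕ} (x y : ∀ _ : Fin s, Fin 2) :
    (TCH s).Adj x y ↔ x ≠ y ∧ ((∀ i, (x i : ℕ) ≤ y i) ∨ (∀ i, (y i : ℕ) ≤ x i)) :=
  Iff.rfl

def intervalGraphOf {W : Type*} (a b : W → ℝ) : SimpleGraph W where
  Adj u v := u ≠ v ∧ (Icc (a u) (b u) ∩ Icc (a v) (b v)).Nonempty
  symm := ⟨by
    intro u v h
    exact ⟨h.1.symm, by rw [Set.inter_comm]; exact h.2⟩⟩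
  loopless := ⟨fun u h => h.1 rfl⟩

lemma isIntervalGraph_intervalGraphOf {W : Type*} (a b : W → ℝ) :
    IsIntervalGraph (intervalGraphOf a b) := ⟨a, b, fun _ _ => Iff.rfl⟩

/-- Key lemma: disjoint joined induced copies of (truncated) hypercube closures
bound the size of any interval representation from below. -/
lemma key_lemma {V : Type*} (G : SimpleGraph V) {τ : Type*} (T : Finset τ)
    (s : τ → ℕ) (hs : ∀ t ∈ T, 2 ≤ s t)
    (ψ : ∀ t, (Fin (s t) → Fin 2) → V)
    (hinj : ∀ t ∈ T, ∀ x y, ψ t x = ψ t y → x = y)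
    (hcross : ∀ t ∈ T, ∀ t' ∈ T, t ≠ t' → ∀ x y, x ≠ (fun _ => 0) → y ≠ (fun _ => 0) →
      G.Adj (ψ t x) (ψ t' y))
    (hwithin : ∀ t ∈ T, ∀ x y, G.Adj (ψ t x) (ψ t y) ↔ (TCH (s t)).Adj x y)
    (k : ℕ) (I : Fin k → SimpleGraph V) (hI : ∀ i, IsIntervalGraph (I i))
    (hGI : ∀ u v, G.Adj u v ↔ (u ≠ v ∧ ∀ i, (I i).Adj u v)) :
    ∑ t ∈ T, boxicity (TCH (s t)) ≤ k := by
  classical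
  choose a b hab using hI
  set S : τ → Finset (Fin k) := fun t => Finset.univ.filter (fun i =>
    ∃ x y : Fin (s t) → Fin 2, x ≠ (fun _ => 0) ∧ y ≠ (fun _ => 0) ∧
      ψ t x ≠ ψ t y ∧ ¬ G.Adj (ψ t x) (ψ t y) ∧ ¬ (I i).Adj (ψ t x) (ψ t y)) with hS
  have hedge : ∀ (u v : V) (i : Fin k), G.Adj u v →
      (Icc (a i u) (b i u) ∩ Icc (a i v) (b i v)).Nonempty := by
    intro u v i h
    exact (((hab i u v).1 (((hGI u v).1 h).2 i))).2
  have hdisj : ∀ t ∈ T, ∀ t' ∈ T, t ≠ t' → Disjoint (S t) (S t') := by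
    intro t ht t' ht' htt'
    rw [Finset.disjoint_left]
    intro i hit hit'
    rw [hS, Finset.mem_filter] at hit hit'
    obtain ⟨-, x, y, hx0, hy0, hne, hnG, hnI⟩ := hit
    obtain ⟨-, x', y', hx0', hy0', hne', hnG', hnI'⟩ := hit'
    have huv : ¬ (Icc (a i (ψ t x)) (b i (ψ t x)) ∩
        Icc (a i (ψ t y)) (b i (ψ t y))).Nonempty := by
      intro hcon
      exact hnI ((hab i _ _).2 ⟨hne, hcon⟩)
    have := interval_cross_s17 (hedge _ _ i (hcross t ht t' ht' htt' x x' hx0 hx0'))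
      (hedge _ _ i (hcross t ht t' ht' htt' x y' hx0 hy0'))
      (hedge _ _ i (hcross t ht t' ht' htt' y x' hy0 hx0'))
      (hedge _ _ i (hcross t ht t' ht' htt' y y' hy0 hy0')) huv
    exact hnI' ((hab i _ _).2 ⟨hne', this⟩)
  have hbound : ∀ t ∈ T, boxicity (TCH (s t)) ≤ (S t).card := by
    intro t ht
    have hs2 := hs t ht
    apply Nat.sInf_le
    set e := (S t).equivFin with he
    set N : Finset (Fin (s t) → Fin 2) :=
      Finset.univ.filter (fun x => x ≠ (fun _ => 0)) with hN
    have htop : (fun _ => (1 : Fin 2)) ∈ N := by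
      rw [hN, Finset.mem_filter]
      refine ⟨Finset.mem_univ _, fun hcon => ?_⟩
      have := congrFun hcon ⟨0, by omega⟩
      exact absurd this (by decide)
    have hNne : N.Nonempty := ⟨_, htop⟩
    have hvx : ∀ x : Fin (s t) → Fin 2, x ≠ (fun _ => 0) → ∀ i : Fin k,
        a i (ψ t x) ≤ b i (ψ t x) := by
      intro x hx0 i
      have : ∃ y, (TCH (s t)).Adj x y := by
        by_cases hxt : x = (fun _ => 1)
        · refine ⟨fun c => if c = ⟨0, by omega⟩ then 1 else 0, ?_⟩
          rw [TCH_adj]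
          constructor
          · intro hcon
            have := congrFun hcon ⟨1, by omega⟩
            rw [hxt] at this
            simp at this
          · right
            intro c
            rw [hxt]
            split <;> simp
        · refine ⟨fun _ => 1, ?_⟩
          rw [TCH_adj]
          exact ⟨hxt, Or.inl fun c => by omega⟩
      obtain ⟨y, hy⟩ := this
      have hGA : G.Adj (ψ t x) (ψ t y) := (hwithin t ht x y).2 hy
      have := hedge _ _ i hGA
      have := this.mono Set.inter_subset_left
      rwa [Set.nonempty_Icc] at this
    set A : Fin (S t).card → (Fin (s t) → Fin 2) → ℝ := fun j x =>
      if x = (fun _ => 0) then N.inf' hNne (fun z => a (e.symm j).1 (ψ t z))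
      else a (e.symm j).1 (ψ t x) with hA
    set B : Fin (S t).card → (Fin (s t) → Fin 2) → ℝ := fun j x =>
      if x = (fun _ => 0) then N.sup' hNne (fun z => b (e.symm j).1 (ψ t z))
      else b (e.symm j).1 (ψ t x) with hB
    refine ⟨fun j => intervalGraphOf (A j) (B j),
      fun j => isIntervalGraph_intervalGraphOf _ _, ?_⟩
    intro x y
    constructor
    · intro h
      have hxy : x ≠ y := h.1
      refine ⟨hxy, fun j => ⟨hxy, ?_⟩⟩
      set i := (e.symm j).1 with hi
      by_cases hx0 : x = (fun _ => 0)
      · have hy0 : y ≠ (fun _ => 0) := fun hc => hxy (hx0.trans hc.symm)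
        have hyN : y ∈ N := by rw [hN, Finset.mem_filter]; exact ⟨Finset.mem_univ _, hy0⟩
        have hab' := hvx y hy0 i
        refine ⟨a i (ψ t y), ?_, ?_⟩
        · rw [hA, hB]
          simp only [if_pos hx0]
          exact Set.mem_Icc.2 ⟨Finset.inf'_le _ hyN,
            le_trans hab' (Finset.le_sup' (fun z => b i (ψ t z)) hyN)⟩
        · rw [hA, hB]
          simp only [if_neg hy0]
          exact Set.mem_Icc.2 ⟨le_refl _, hab'⟩
      · by_cases hy0 : y = (fun _ => 0)
        · have hxN : x ∈ N := by rw [hN, Finset.mem_filter]; exact ⟨Finset.mem_univ _, hx0⟩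
          have hab' := hvx x hx0 i
          refine ⟨a i (ψ t x), ?_, ?_⟩
          · rw [hA, hB]
            simp only [if_neg hx0]
            exact Set.mem_Icc.2 ⟨le_refl _, hab'⟩
          · rw [hA, hB]
            simp only [if_pos hy0]
            exact Set.mem_Icc.2 ⟨Finset.inf'_le _ hxN,
              le_trans hab' (Finset.le_sup' (fun z => b i (ψ t z)) hxN)⟩
        · have hGA : G.Adj (ψ t x) (ψ t y) := (hwithin t ht x y).2 h
          have := hedge _ _ i hGA
          rw [hA, hB]
          simp only [if_neg hx0, if_neg hy0]
          exact this
    · rintro ⟨hxy, hall⟩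
      rw [TCH_adj]
      refine ⟨hxy, ?_⟩
      by_contra hcomp
      have hx0 : x ≠ (fun _ => 0) := by
        intro hc
        exact hcomp (Or.inl fun c => by rw [hc]; simp)
      have hy0 : y ≠ (fun _ => 0) := by
        intro hc
        exact hcomp (Or.inr fun c => by rw [hc]; simp)
      have hnG : ¬ G.Adj (ψ t x) (ψ t y) := by
        rw [hwithin t ht, TCH_adj]
        tauto
      have hne : ψ t x ≠ ψ t y := fun hc => hxy (hinj t ht x y hc)
      have : ∃ i0, ¬ (I i0).Adj (ψ t x) (ψ t y) := by
        by_contra hc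
        push_neg at hc
        exact hnG ((hGI _ _).2 ⟨hne, hc⟩)
      obtain ⟨i0, hi0⟩ := this
      have hmem : i0 ∈ S t := by
        rw [hS, Finset.mem_filter]
        exact ⟨Finset.mem_univ _, x, y, hx0, hy0, hne, hnG, hi0⟩
      have hj := hall (e ⟨i0, hmem⟩)
      have hcoe : ((e.symm (e ⟨i0, hmem⟩)).1 : Fin k) = i0 := by
        rw [Equiv.symm_apply_apply]
      rcases hj with ⟨-, hjint⟩
      rw [hA, hB] at hjint
      simp only [if_neg hx0, if_neg hy0, hcoe] at hjint
      exact hi0 ((hab i0 _ _).2 ⟨hne, hjint⟩)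
  calc ∑ t ∈ T, boxicity (TCH (s t)) ≤ ∑ t ∈ T, (S t).card :=
        Finset.sum_le_sum hbound
    _ = (T.biUnion S).card := (Finset.card_biUnion hdisj).symm
    _ ≤ Fintype.card (Fin k) := Finset.card_le_univ _
    _ = k := Fintype.card_fin k

lemma boxicity_mem {V : Type*} [Fintype V] (G : SimpleGraph V) :
    boxicity G ∈ {k | ∃ I : Fin k → SimpleGraph V, (∀ i, IsIntervalGraph (I i)) ∧
      ∀ u v, G.Adj u v ↔ (u ≠ v ∧ ∀ i, (I i).Adj u v)} := by
  classical
  apply Nat.sInf_mem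
  refine ⟨Fintype.card (V × V), ?_⟩
  set e : Fin (Fintype.card (V × V)) ≃ V × V := (Fintype.equivFin (V × V)).symm with he
  set c : V × V → Prop := fun p => ¬ G.Adj p.1 p.2 ∧ p.1 ≠ p.2 with hc
  set a : V × V → V → ℝ := fun p w => if c p ∧ w = p.2 then 2 else 0 with ha
  set b : V × V → V → ℝ := fun p w => if c p ∧ w = p.1 then 1 else 3 with hb
  have hle : ∀ (p : V × V) (w z : V), ¬(c p ∧ w = p.2 ∧ z = p.1) → a p w ≤ b p z := by
    intro p w z hwz
    simp only [ha, hb]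
    split_ifs with h1 h2
    · exact absurd ⟨h1.1, h1.2, h2.2⟩ hwz
    · norm_num
    · norm_num
    · norm_num
  refine ⟨fun j => intervalGraphOf (a (e j)) (b (e j)),
    fun j => isIntervalGraph_intervalGraphOf _ _, ?_⟩
  intro u v
  constructor
  · intro h
    refine ⟨h.ne, fun j => ⟨h.ne, ?_⟩⟩
    set p := e j with hp
    have hnot : ¬(c p ∧ u = p.2 ∧ v = p.1) := by
      rintro ⟨hcp, rfl, rfl⟩; exact hcp.1 h.symm
    have hnot' : ¬(c p ∧ v = p.2 ∧ u = p.1) := by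
      rintro ⟨hcp, rfl, rfl⟩; exact hcp.1 h
    have hdiag : ∀ w : V, ¬(c p ∧ w = p.2 ∧ w = p.1) := by
      rintro w ⟨hcp, rfl, hw⟩; exact hcp.2 hw.symm
    exact ⟨max (a p u) (a p v), Set.mem_Icc.2 ⟨le_max_left _ _,
        max_le (hle p u u (hdiag u)) (hle p v u hnot')⟩,
      Set.mem_Icc.2 ⟨le_max_right _ _,
        max_le (hle p u v hnot) (hle p v v (hdiag v))⟩⟩
  · rintro ⟨huv, hall⟩
    by_contra hnadj
    have hcp : c (u, v) := ⟨hnadj, huv⟩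
    have hj := hall (e.symm (u, v))
    rcases hj with ⟨-, x, hx1, hx2⟩
    simp only [ha, hb, Equiv.apply_symm_apply, Set.mem_Icc] at hx1 hx2
    simp only [hcp, huv.symm, true_and, and_true, and_false, if_true, if_false] at hx1 hx2
    linarith [hx1.1, hx1.2, hx2.1, hx2.2]

/-- Extension of a cube vertex to all of `ℕ`. -/
def extFn {n : ℕ} (x : Fin n → Fin 2) : ℕ → ℕ :=
  fun c => if h : c < n then (x ⟨c, h⟩ : ℕ) else 0

lemma extFn_le_one {n : ℕ} (x : Fin n → Fin 2) (c : ℕ) : extFn x c ≤ 1 := by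
  unfold extFn
  split
  · exact Nat.lt_succ_iff.mp (x _).isLt
  · exact Nat.zero_le _

lemma extFn_eq {n : ℕ} (x : Fin n → Fin 2) (c : ℕ) (h : c < n) :
    extFn x c = (x ⟨c, h⟩ : ℕ) := dif_pos h

/-- The embedding of the `t`-th truncated hypercube copy into the chain product. -/
def psiC (d : ℕ) (m : ℕ → ℕ) (t : (_ : ℕ) × ℕ) (x : Fin (d - t.1) → Fin 2)
    (i : Fin d) : Fin (m i + 1) :=
  ⟨if (i : ℕ) < t.1 then m i else min (t.2 + extFn x ((i : ℕ) - t.1)) (m i), by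
    split_ifs
    · exact Nat.lt_succ_self _
    · exact Nat.lt_succ_of_le (min_le_right _ _)⟩

lemma psiC_val_lt {d : ℕ} {m : ℕ → ℕ} {t : (_ : ℕ) × ℕ} {x : Fin (d - t.1) → Fin 2}
    {i : Fin d} (h : (i : ℕ) < t.1) : (psiC d m t x i : ℕ) = m i := by
  simp only [psiC, if_pos h]

lemma psiC_val_ge {d : ℕ} {m : ℕ → ℕ} {t : (_ : ℕ) × ℕ} {x : Fin (d - t.1) → Fin 2}
    {i : Fin d} (hb : t.2 + 1 ≤ m i) (h : ¬ ((i : ℕ) < t.1)) :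
    (psiC d m t x i : ℕ) = t.2 + extFn x ((i : ℕ) - t.1) := by
  simp only [psiC, if_neg h]
  exact min_eq_left (by have := extFn_le_one x ((i : ℕ) - t.1); omega)

end Aux

theorem boxicity_TCC_general_lower (d : ℕ) (hd : 2 ≤ d) (m : ℕ → ℕ)
    (hm : ∀ i j : ℕ, i ≤ j → j < d → m i ≤ m j) :
    m 0 * boxicity (TCH d) +
      ∑ l ∈ Finset.Ico 1 (d - 1), (m l - m (l - 1)) * boxicity (TCH (d - l)) ≤
    boxicity (TCC (fun i : Fin d => m i)) := by
  classical
  set G := TCC (fun i : Fin d => m i) with hG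
  set lo : ℕ → ℕ := fun l => if l = 0 then 0 else m (l - 1) with hlo
  set T : Finset ((_ : ℕ) × ℕ) :=
    (Finset.range (d - 1)).sigma (fun l => Finset.Ico (lo l) (m l)) with hT
  have hmemT : ∀ t ∈ T, t.1 < d - 1 ∧ lo t.1 ≤ t.2 ∧ t.2 < m t.1 := by
    intro t ht
    rw [hT, Finset.mem_sigma, Finset.mem_range, Finset.mem_Ico] at ht
    exact ⟨ht.1, ht.2.1, ht.2.2⟩
  -- base bound on the offset relative to coordinates
  have hkey : ∀ t ∈ T, ∀ i : Fin d, t.1 ≤ (i : ℕ) → t.2 + 1 ≤ m i := by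
    intro t ht i hi
    obtain ⟨h1, h2, h3⟩ := hmemT t ht
    have : m t.1 ≤ m i := hm t.1 i hi i.isLt
    omega
  -- injectivity within a part
  have hinj : ∀ t ∈ T, ∀ x y : Fin (d - t.1) → Fin 2,
      psiC d m t x = psiC d m t y → x = y := by
    intro t ht x y h
    funext c
    have hcd : t.1 + (c : ℕ) < d := by
      have := c.isLt
      omega
    have hile : t.1 ≤ ((⟨t.1 + (c : ℕ), hcd⟩ : Fin d) : ℕ) := Nat.le_add_right _ _
    have hv := congrArg (fun f => (f (⟨t.1 + (c : ℕ), hcd⟩ : Fin d) : ℕ)) h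
    simp only at hv
    rw [psiC_val_ge (hkey t ht _ hile) (Nat.not_lt.2 hile),
      psiC_val_ge (hkey t ht _ hile) (Nat.not_lt.2 hile)] at hv
    have hsub : ((⟨t.1 + (c : ℕ), hcd⟩ : Fin d) : ℕ) - t.1 = (c : ℕ) := by
      show t.1 + (c : ℕ) - t.1 = (c : ℕ)
      omega
    rw [hsub, extFn_eq x _ c.isLt, extFn_eq y _ c.isLt] at hv
    have : (x ⟨(c : ℕ), c.isLt⟩ : ℕ) = (y ⟨(c : ℕ), c.isLt⟩ : ℕ) := by omega
    have := Fin.val_injective this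
    simpa using this
  -- within-part adjacency is hypercube adjacency
  have hwithin : ∀ t ∈ T, ∀ x y : Fin (d - t.1) → Fin 2,
      G.Adj (psiC d m t x) (psiC d m t y) ↔ (TCH (d - t.1)).Adj x y := by
    intro t ht x y
    have hcomp : ∀ x y : Fin (d - t.1) → Fin 2,
        (∀ i : Fin d, (psiC d m t x i : ℕ) ≤ (psiC d m t y i : ℕ)) ↔
          ∀ c : Fin (d - t.1), (x c : ℕ) ≤ (y c : ℕ) := by
      intro x y
      constructor
      · intro h c
        have hcd : t.1 + (c : ℕ) < d := by have := c.isLt; omega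
        have hh := h ⟨t.1 + (c : ℕ), hcd⟩
        have hile : t.1 ≤ t.1 + (c : ℕ) := Nat.le_add_right _ _
        rw [psiC_val_ge (hkey t ht _ hile) (Nat.not_lt.2 hile),
          psiC_val_ge (hkey t ht _ hile) (Nat.not_lt.2 hile)] at hh
        have hsub : ((⟨t.1 + (c : ℕ), hcd⟩ : Fin d) : ℕ) - t.1 = (c : ℕ) := by
          show t.1 + (c : ℕ) - t.1 = (c : ℕ)
          omega
        rw [hsub, extFn_eq x _ c.isLt, extFn_eq y _ c.isLt] at hh
        simpa using hh
      · intro h i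
        by_cases hi : (i : ℕ) < t.1
        · rw [psiC_val_lt hi, psiC_val_lt hi]
        · rw [psiC_val_ge (hkey t ht i (by omega)) hi,
            psiC_val_ge (hkey t ht i (by omega)) hi]
          have hlt : (i : ℕ) - t.1 < d - t.1 := by
            have := i.isLt
            omega
          rw [extFn_eq x _ hlt, extFn_eq y _ hlt]
          exact Nat.add_le_add_left (h _) _
    constructor
    · rintro ⟨hne, hcase⟩
      refine ⟨fun hc => hne (by rw [hc]), ?_⟩
      exact hcase.imp (hcomp x y).1 (hcomp y x).1
    · rintro ⟨hne, hcase⟩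
      refine ⟨fun hc => hne (hinj t ht x y hc), ?_⟩
      exact hcase.imp (hcomp x y).2 (hcomp y x).2
  -- the lexicographic offset fact
  have hstar : ∀ t ∈ T, ∀ t' ∈ T,
      (t.1 < t'.1 ∨ (t.1 = t'.1 ∧ t.2 < t'.2)) → t.2 + 1 ≤ t'.2 := by
    intro t ht t' ht' hlex
    obtain ⟨h1, h2, h3⟩ := hmemT t ht
    obtain ⟨h1', h2', h3'⟩ := hmemT t' ht'
    rcases hlex with h | ⟨he, hj⟩
    · have hml : m t.1 ≤ m (t'.1 - 1) := hm t.1 (t'.1 - 1) (by omega) (by omega)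
      have hlo' : lo t'.1 = m (t'.1 - 1) := by
        rw [hlo]
        simp only [if_neg (by omega : ¬ t'.1 = 0)]
      omega
    · omega
  -- cross-comparability
  have hcrossle : ∀ t ∈ T, ∀ t' ∈ T,
      (t.1 < t'.1 ∨ (t.1 = t'.1 ∧ t.2 < t'.2)) →
      ∀ (x : Fin (d - t.1) → Fin 2) (y : Fin (d - t'.1) → Fin 2) (i : Fin d),
        (psiC d m t x i : ℕ) ≤ (psiC d m t' y i : ℕ) := by
    intro t ht t' ht' hlex x y i
    have hll' : t.1 ≤ t'.1 := by omega
    have hst := hstar t ht t' ht' hlex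
    by_cases hi : (i : ℕ) < t.1
    · rw [psiC_val_lt hi, psiC_val_lt (by omega)]
    · by_cases hi' : (i : ℕ) < t'.1
      · rw [psiC_val_ge (hkey t ht i (by omega)) hi, psiC_val_lt hi']
        have := extFn_le_one x ((i : ℕ) - t.1)
        have := hkey t ht i (by omega)
        omega
      · rw [psiC_val_ge (hkey t ht i (by omega)) hi,
          psiC_val_ge (hkey t' ht' i (by omega)) hi']
        have := extFn_le_one x ((i : ℕ) - t.1)
        omega
  have hcrossne : ∀ t ∈ T, ∀ t' ∈ T,
      (t.1 < t'.1 ∨ (t.1 = t'.1 ∧ t.2 < t'.2)) →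
      ∀ (x : Fin (d - t.1) → Fin 2) (y : Fin (d - t'.1) → Fin 2),
        y ≠ (fun _ => 0) → psiC d m t x ≠ psiC d m t' y := by
    intro t ht t' ht' hlex x y hy0 hcon
    obtain ⟨c, hc⟩ := Function.ne_iff.1 hy0
    have hcd : t'.1 + (c : ℕ) < d := by have := c.isLt; omega
    have hv := congrArg (fun f => (f (⟨t'.1 + (c : ℕ), hcd⟩ : Fin d) : ℕ)) hcon
    simp only at hv
    have hll' : t.1 ≤ t'.1 := by omega
    have hile' : t'.1 ≤ ((⟨t'.1 + (c : ℕ), hcd⟩ : Fin d) : ℕ) := Nat.le_add_right _ _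
    have hile : t.1 ≤ ((⟨t'.1 + (c : ℕ), hcd⟩ : Fin d) : ℕ) := le_trans hll' hile'
    rw [psiC_val_ge (hkey t ht _ hile) (Nat.not_lt.2 hile),
      psiC_val_ge (hkey t' ht' _ hile') (Nat.not_lt.2 hile')] at hv
    have hsub : ((⟨t'.1 + (c : ℕ), hcd⟩ : Fin d) : ℕ) - t'.1 = (c : ℕ) := by
      show t'.1 + (c : ℕ) - t'.1 = (c : ℕ)
      omega
    rw [hsub, extFn_eq y _ c.isLt] at hv
    have hyc : (y ⟨(c : ℕ), c.isLt⟩ : ℕ) = 1 := by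
      have heta : (⟨(c : ℕ), c.isLt⟩ : Fin (d - t'.1)) = c := Fin.eta c c.isLt
      rw [heta]
      have h2 := (y c).isLt
      have h0 : (y c : ℕ) ≠ 0 := fun h0 => hc (Fin.ext h0)
      omega
    have hst := hstar t ht t' ht' hlex
    have := extFn_le_one x (((⟨t'.1 + (c : ℕ), hcd⟩ : Fin d) : ℕ) - t.1)
    omega
  -- full cross adjacency
  have hcross : ∀ t ∈ T, ∀ t' ∈ T, t ≠ t' →
      ∀ (x : Fin (d - t.1) → Fin 2) (y : Fin (d - t'.1) → Fin 2),
        x ≠ (fun _ => 0) → y ≠ (fun _ => 0) →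
        G.Adj (psiC d m t x) (psiC d m t' y) := by
    intro t ht t' ht' hne x y hx0 hy0
    have htri : (t.1 < t'.1 ∨ (t.1 = t'.1 ∧ t.2 < t'.2)) ∨
        (t'.1 < t.1 ∨ (t'.1 = t.1 ∧ t'.2 < t.2)) := by
      by_contra hcc
      push_neg at hcc
      apply hne
      obtain ⟨l, j⟩ := t
      obtain ⟨l', j'⟩ := t'
      simp only at hcc
      have : l = l' ∧ j = j' := by omega
      rw [this.1, this.2]
    rcases htri with hlex | hlex
    · exact ⟨hcrossne t ht t' ht' hlex x y hy0, Or.inl (hcrossle t ht t' ht' hlex x y)⟩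
    · exact ⟨(hcrossne t' ht' t ht hlex y x hx0).symm,
        Or.inr (hcrossle t' ht' t ht hlex y x)⟩
  -- dimensions at least 2
  have hs : ∀ t ∈ T, 2 ≤ d - t.1 := by
    intro t ht
    have := (hmemT t ht).1
    omega
  -- apply the key lemma to an optimal representation
  obtain ⟨I, hI, hGI⟩ := boxicity_mem G
  have hmain := key_lemma G T (fun t => d - t.1) hs (psiC d m) hinj hcross hwithin
    (boxicity G) I hI hGI
  -- compute the sum over T
  have hsum : ∑ t ∈ T, boxicity (TCH (d - t.1)) =
      m 0 * boxicity (TCH d) +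
        ∑ l ∈ Finset.Ico 1 (d - 1), (m l - m (l - 1)) * boxicity (TCH (d - l)) := by
    rw [hT, Finset.sum_sigma]
    have step1 : ∀ l, (∑ _j ∈ Finset.Ico (lo l) (m l), boxicity (TCH (d - l)))
        = (m l - lo l) * boxicity (TCH (d - l)) := by
      intro l
      rw [Finset.sum_const, Nat.card_Ico, smul_eq_mul]
    simp only [step1]
    have hd1 : d - 1 = (d - 2) + 1 := by omega
    rw [hd1, Finset.sum_range_succ']
    have hzero : (m 0 - lo 0) * boxicity (TCH (d - 0)) = m 0 * boxicity (TCH d) := by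
      rw [hlo]
      simp
    rw [hzero, add_comm]
    congr 1
    rw [Finset.sum_Ico_eq_sum_range]
    have : d - 2 + 1 - 1 = d - 2 := by omega
    rw [this]
    apply Finset.sum_congr rfl
    intro i _
    have h1 : 1 + i = i + 1 := by omega
    rw [h1]
    congr 1
  rw [← hsum]
  exact hmain
end
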